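/- arXiv:2510.18922 — 7 statements merged into one kernel-verified Lean document; each statement's English description precedes it below -/
import Mathlib

section
/- Let a < b, let p : ℝ → ℝ be continuous and positive on (a,b), let c ∈ (a,b), and suppose the function s ↦ (p(s))^{-1/2} is NOT integrable on (c,b). Let E > 0, let t₀ < T with T ∈ ℝ, and let x : ℝ → ℝ be differentiable on [t₀, T) with x(t₀) = c, x(t) ∈ (a,b) and x′(t) = 2·√E·√(p(x(t))) for all t ∈ [t₀, T). Then there exists b′ < b such that x(t) ≤ b′ for all t ∈ [t₀, T); in particular x(t) does not tend to b as t → T. (The Hamiltonian vector field is complete at the endpoint b when 1/√p ∉ L¹(c,b).) -/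
/-!
For a trajectory of `x' = v(x)` with `v > 0`, let `F y = ∫_c^y ds / v(s)`. Then
`d/dt F (x t) = x'(t) / v(x t) = 1`, so `F (x t) = t - t₀` stays below `T - t₀`. Since `1 / v`
is positive and not integrable on `(c, b)`, `F` exceeds this bound at some `b' < b`, and as `F`
is monotone the trajectory cannot pass `b'`. Here `v = 2√E √p`.
-/

open MeasureTheory Set Filter

theorem Convex.eq_add_mul_sub_of_forall_hasDerivAt {g : ℝ → ℝ} {k : ℝ} {s : Set ℝ}
    (hs : Convex ℝ s) (hg : ∀ t ∈ s, HasDerivAt g k t) {t₀ t : ℝ} (ht₀ : t₀ ∈ s)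
    (ht : t ∈ s) : g t = g t₀ + k * (t - t₀) := by
  have hderiv : ∀ τ ∈ s, HasDerivWithinAt (fun τ => g τ - k * τ) 0 s τ := fun τ hτ => by
    have h := (hg τ hτ).sub ((hasDerivAt_id τ).const_mul k)
    rw [mul_one, sub_self] at h
    exact h.hasDerivWithinAt
  have hconst := norm_image_sub_le_of_norm_hasDerivWithin_le hderiv
    (fun _ _ => norm_zero.le) hs ht₀ ht
  rw [zero_mul, norm_le_zero_iff, sub_eq_zero] at hconst
  linarith

theorem exists_lt_intervalIntegral_of_not_integrableOn {f : ℝ → ℝ} {c b : ℝ}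
    (hfi : ∀ y ∈ Ioo c b, IntervalIntegrable f volume c y) (hf : ∀ y ∈ Ioo c b, 0 ≤ f y)
    (hnot : ¬IntegrableOn f (Ioo c b)) (M : ℝ) : ∃ y ∈ Ioo c b, M < ∫ s in c..y, f s := by
  by_contra! hbdd
  have hcb : c < b := by
    by_contra! hbc
    exact hnot (by simp [Ioo_eq_empty_of_le hbc])
  obtain ⟨u, -, hu, hu_lim⟩ := exists_seq_strictMono_tendsto' hcb
  refine hnot (IntegrableOn.mono_set ?_ Ioo_subset_Ioc_self)
  refine integrableOn_Ioc_of_intervalIntegral_norm_bounded_right (I := M)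
    (fun n => (hfi (u n) (hu n)).1) hu_lim (Eventually.of_forall fun n => ?_)
  have hIoc : Ioc c (u n) ⊆ Ioo c b := Ioc_subset_Ioo_right (hu n).2
  calc ∫ s in Ioc c (u n), ‖f s‖
      = ∫ s in Ioc c (u n), f s :=
        setIntegral_congr_fun measurableSet_Ioc fun s hs => Real.norm_of_nonneg (hf s (hIoc hs))
    _ = ∫ s in c..u n, f s := (intervalIntegral.integral_of_le (hu n).1.le).symm
    _ ≤ M := hbdd (u n) (hu n)

theorem exists_lt_forall_le_of_not_integrableOn_inv {a b c t₀ T : ℝ} {v x : ℝ → ℝ}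
    (hv : ContinuousOn v (Ioo a b)) (hvpos : ∀ s ∈ Ioo a b, 0 < v s) (hc : c ∈ Ioo a b)
    (hnot : ¬IntegrableOn (fun s => 1 / v s) (Ioo c b)) (hx0 : x t₀ = c)
    (hxab : ∀ t ∈ Ico t₀ T, x t ∈ Ioo a b)
    (hx : ∀ t ∈ Ico t₀ T, HasDerivAt x (v (x t)) t) :
    ∃ b' < b, ∀ t ∈ Ico t₀ T, x t ≤ b' := by
  set f : ℝ → ℝ := fun s => 1 / v s
  set F : ℝ → ℝ := fun y => ∫ s in c..y, f s
  have hf : ContinuousOn f (Ioo a b) :=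
    continuousOn_const.div hv fun s hs => (hvpos s hs).ne'
  have hfi : ∀ y ∈ Ioo a b, IntervalIntegrable f volume c y := fun y hy =>
    (hf.mono (ordConnected_Ioo.uIcc_subset hc hy)).intervalIntegrable
  have hF : ∀ y ∈ Ioo a b, HasDerivAt F (f y) y := fun y hy =>
    intervalIntegral.integral_hasDerivAt_right (hfi y hy)
      (hf.stronglyMeasurableAtFilter isOpen_Ioo y hy) (hf.continuousAt (isOpen_Ioo.mem_nhds hy))
  have hFx : ∀ t ∈ Ico t₀ T, F (x t) = t - t₀ := by
    intro t ht
    have hFx_deriv : ∀ τ ∈ Ico t₀ T, HasDerivAt (F ∘ x) 1 τ := fun τ hτ => by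
      simpa [f, (hvpos _ (hxab τ hτ)).ne'] using (hF _ (hxab τ hτ)).comp τ (hx τ hτ)
    have ht₀ : t₀ ∈ Ico t₀ T := ⟨le_rfl, ht.1.trans_lt ht.2⟩
    simpa [hx0, F] using (convex_Ico t₀ T).eq_add_mul_sub_of_forall_hasDerivAt hFx_deriv ht₀ ht
  have hf_nonneg : ∀ y ∈ Ioo c b, 0 ≤ f y := fun y hy =>
    one_div_nonneg.2 (hvpos y ⟨hc.1.trans hy.1, hy.2⟩).le
  obtain ⟨b', hb', hFb'⟩ := exists_lt_intervalIntegral_of_not_integrableOn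
    (fun y hy => hfi y ⟨hc.1.trans hy.1, hy.2⟩) hf_nonneg hnot (T - t₀)
  refine ⟨b', hb'.2, fun t ht => ?_⟩
  by_contra! hlt
  have hmono : F b' ≤ F (x t) :=
    intervalIntegral.integral_mono_interval le_rfl hb'.1.le hlt.le
      ((ae_restrict_iff' measurableSet_Ioc).2 (ae_of_all _ fun s hs =>
        hf_nonneg s ⟨hs.1, hs.2.trans_lt (hxab t ht).2⟩))
      (hfi _ (hxab t ht))
  linarith [hFx t ht, ht.2]

theorem hamiltonian_complete_at_endpoint_of_not_integrable_general
    (a b : ℝ) (p : ℝ → ℝ)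
    (hp : ContinuousOn p (Set.Ioo a b))
    (hppos : ∀ s ∈ Set.Ioo a b, 0 < p s)
    (c : ℝ) (hc : c ∈ Set.Ioo a b)
    (hnotint : ¬ IntegrableOn (fun s => 1 / Real.sqrt (p s)) (Set.Ioo c b))
    (E : ℝ) (hE : 0 < E)
    (t₀ T : ℝ)
    (x : ℝ → ℝ) (hx0 : x t₀ = c)
    (hxab : ∀ t ∈ Set.Ico t₀ T, x t ∈ Set.Ioo a b)
    (hx : ∀ t ∈ Set.Ico t₀ T,
      HasDerivAt x (2 * Real.sqrt E * Real.sqrt (p (x t))) t) :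
    ∃ b' : ℝ, b' < b ∧ ∀ t ∈ Set.Ico t₀ T, x t ≤ b' := by
  have hsqrtE : 0 < 2 * Real.sqrt E := by positivity
  refine exists_lt_forall_le_of_not_integrableOn_inv (v := fun s => 2 * √E * √(p s))
    (continuousOn_const.mul (Real.continuous_sqrt.comp_continuousOn hp))
    (fun s hs => mul_pos hsqrtE (Real.sqrt_pos.2 (hppos s hs))) hc ?_ hx0 hxab hx
  intro hint
  refine hnotint (IntegrableOn.congr_fun (hint.const_mul (2 * √E)) (fun s _ => ?_)
    measurableSet_Ioo)
  field_simp

/-- Completeness of the Hamiltonian vector field at the endpoint `b` when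
`1/√p ∉ L¹(c,b)`: a trajectory of `x' = 2·√E·√(p(x))` starting at `c` and defined on a
finite time interval `[t₀, T)` stays below some `b' < b`; in particular it does not
reach `b` in finite time. -/
theorem hamiltonian_complete_at_endpoint_of_not_integrable
    (a b : ℝ) (hab : a < b) (p : ℝ → ℝ)
    (hp : ContinuousOn p (Set.Ioo a b))
    (hppos : ∀ s ∈ Set.Ioo a b, 0 < p s)
    (c : ℝ) (hc : c ∈ Set.Ioo a b)
    (hnotint : ¬ IntegrableOn (fun s => 1 / Real.sqrt (p s)) (Set.Ioo c b))
    (E : ℝ) (hE : 0 < E)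
    (t₀ T : ℝ) (hT : t₀ < T)
    (x : ℝ → ℝ) (hx0 : x t₀ = c)
    (hxab : ∀ t ∈ Set.Ico t₀ T, x t ∈ Set.Ioo a b)
    (hx : ∀ t ∈ Set.Ico t₀ T,
      HasDerivAt x (2 * Real.sqrt E * Real.sqrt (p (x t))) t) :
    ∃ b' : ℝ, b' < b ∧ ∀ t ∈ Set.Ico t₀ T, x t ≤ b' :=
  hamiltonian_complete_at_endpoint_of_not_integrable_general a b p hp hppos c hc hnotint E hE t₀ T x
    hx0 hxab hx
end

section
/- Let x₀ < b be reals, let p, q : ℝ → ℝ be continuous on [x₀, b) with p > 0 on [x₀, b), and let γ ∈ ℝ with q(t) > γ for all t ∈ [x₀, b). Let u : ℝ → ℝ be differentiable on [x₀, b) with t ↦ p(t)·(deriv u)(t) differentiable on [x₀, b), satisfying deriv(t ↦ p(t)·(deriv u)(t))(x) = (q(x) − γ)·u(x) for all x ∈ [x₀, b), with u(x₀) = 1 and (deriv u)(x₀) = 0. Then u and t ↦ p(t)·(deriv u)(t) are monotone increasing on [x₀, b), p(t)·(deriv u)(t) > 0 for t ∈ (x₀, b), and for every c ∈ (x₀,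 b) and every x ∈ (c, b) one has u(x) ≥ u(x₀) + p(c)·(deriv u)(c)·∫_c^x dt/p(t), with p(c)·(deriv u)(c) > 0. -/
/-- For a solution `u` of `(p·u')' = (q − γ)·u` on `[x₀, b)` with `q > γ`, `p > 0`,
`u(x₀) = 1` and `u'(x₀) = 0`: both `u` and `p·u'` are monotone increasing on `[x₀,b)`,
`p·u' > 0` on `(x₀,b)`, and for all `x₀ < c < x < b` one has
`u(x) ≥ u(x₀) + p(c)·u'(c)·∫_c^x dt/p(t)` with `p(c)·u'(c) > 0`. -/
theorem sturm_liouville_solution_growth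
    (x₀ b : ℝ) (hx₀b : x₀ < b)
    (p q : ℝ → ℝ)
    (hp : ContinuousOn p (Set.Ico x₀ b)) (hq : ContinuousOn q (Set.Ico x₀ b))
    (hppos : ∀ t ∈ Set.Ico x₀ b, 0 < p t)
    (γ : ℝ) (hqγ : ∀ t ∈ Set.Ico x₀ b, γ < q t)
    (u : ℝ → ℝ)
    (hu : ∀ t ∈ Set.Ico x₀ b, DifferentiableAt ℝ u t)
    (hpu : ∀ t ∈ Set.Ico x₀ b, DifferentiableAt ℝ (fun s => p s * deriv u s) t)
    (heq : ∀ t ∈ Set.Ico x₀ b,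
      deriv (fun s => p s * deriv u s) t = (q t - γ) * u t)
    (hu0 : u x₀ = 1) (hu'0 : deriv u x₀ = 0) :
    MonotoneOn u (Set.Ico x₀ b) ∧
    MonotoneOn (fun t => p t * deriv u t) (Set.Ico x₀ b) ∧
    (∀ t ∈ Set.Ioo x₀ b, 0 < p t * deriv u t) ∧
    (∀ c ∈ Set.Ioo x₀ b, 0 < p c * deriv u c ∧
      ∀ x ∈ Set.Ioo c b,
        u x₀ + p c * deriv u c * ∫ t in c..x, 1 / p t ≤ u x) := by
  set v : ℝ → ℝ := fun t => p t * deriv u t with hv_def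
  have hx₀ : x₀ ∈ Set.Ico x₀ b := ⟨le_rfl, hx₀b⟩
  have hv0 : v x₀ = 0 := by simp [hv_def, hu'0]
  have hvcont : ContinuousOn v (Set.Ico x₀ b) := fun t ht =>
    (hpu t ht).continuousAt.continuousWithinAt
  have hucont : ContinuousOn u (Set.Ico x₀ b) := fun t ht =>
    (hu t ht).continuousAt.continuousWithinAt
  -- key step: if u > 0 on [x₀, z), then 1 ≤ u z and nice behavior on [x₀, z]
  have key : ∀ z, x₀ ≤ z → z < b → (∀ t, x₀ ≤ t → t < z → 0 < u t) → 1 ≤ u z := by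
    intro z hz1 hz2 hz3
    have hsub : Set.Icc x₀ z ⊆ Set.Ico x₀ b := fun t ht => ⟨ht.1, lt_of_le_of_lt ht.2 hz2⟩
    have hvmono : StrictMonoOn v (Set.Icc x₀ z) := by
      refine strictMonoOn_of_deriv_pos (convex_Icc _ _) (hvcont.mono hsub) ?_
      intro t ht
      rw [interior_Icc] at ht
      have ht' : t ∈ Set.Ico x₀ b := hsub ⟨ht.1.le, ht.2.le⟩
      rw [heq t ht']
      exact mul_pos (sub_pos.mpr (hqγ t ht')) (hz3 t ht.1.le ht.2)
    have hvnn : ∀ t ∈ Set.Icc x₀ z, 0 ≤ v t := by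
      intro t ht
      rcases eq_or_lt_of_le ht.1 with h | h
      · rw [← h, hv0]
      · rw [← hv0]
        exact (hvmono ⟨le_rfl, hz1⟩ ht h).le
    have humono : MonotoneOn u (Set.Icc x₀ z) := by
      refine monotoneOn_of_deriv_nonneg (convex_Icc _ _) (hucont.mono hsub) ?_ ?_
      · intro t ht
        rw [interior_Icc] at ht
        exact (hu t (hsub ⟨ht.1.le, ht.2.le⟩)).differentiableWithinAt
      · intro t ht
        rw [interior_Icc] at ht
        have h1 : 0 ≤ p t * deriv u t := hvnn t ⟨ht.1.le, ht.2.le⟩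
        have h2 := hppos t (hsub ⟨ht.1.le, ht.2.le⟩)
        by_contra h; push_neg at h
        nlinarith [mul_pos h2 (neg_pos.mpr h)]
    have := humono ⟨le_rfl, hz1⟩ ⟨hz1, le_rfl⟩ hz1
    rwa [hu0] at this
  -- positivity of u on the whole interval
  have hupos : ∀ t ∈ Set.Ico x₀ b, 0 < u t := by
    by_contra h
    push_neg at h
    obtain ⟨t₀, ht₀, ht₀u⟩ := h
    set A : Set ℝ := {x ∈ Set.Ico x₀ b | u x ≤ 0} with hA_def
    have hA_ne : A.Nonempty := ⟨t₀, ht₀, ht₀u⟩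
    have hA_bdd : BddBelow A := ⟨x₀, fun x hx => hx.1.1⟩
    set z := sInf A with hz_def
    have hz1 : x₀ ≤ z := le_csInf hA_ne fun x hx => hx.1.1
    have hz2 : z < b := lt_of_le_of_lt (csInf_le hA_bdd ⟨ht₀, ht₀u⟩) ht₀.2
    have hzIco : z ∈ Set.Ico x₀ b := ⟨hz1, hz2⟩
    have hzcl : z ∈ closure A := csInf_mem_closure hA_ne hA_bdd
    have huz : u z ≤ 0 := by
      by_contra hc
      push_neg at hc
      have hev : ∀ᶠ x in nhds z, 0 < u x :=
        (hu z hzIco).continuousAt.eventually_mem (Ioi_mem_nhds hc)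
      rw [mem_closure_iff_nhds] at hzcl
      obtain ⟨x, hx1, hx2⟩ := hzcl _ hev
      exact absurd hx2.2 (not_le.mpr hx1)
    have hlt : ∀ t, x₀ ≤ t → t < z → 0 < u t := by
      intro t ht1 ht2
      have htIco : t ∈ Set.Ico x₀ b := ⟨ht1, ht2.trans hz2⟩
      have : t ∉ A := fun hmem => absurd (csInf_le hA_bdd hmem) (not_le.mpr ht2)
      by_contra hc
      push_neg at hc
      exact this ⟨htIco, hc⟩
    linarith [key z hz1 hz2 hlt]
  -- v is strictly monotone on [x₀, b)
  have hvsmono : StrictMonoOn v (Set.Ico x₀ b) := by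
    refine strictMonoOn_of_deriv_pos (convex_Ico _ _) hvcont ?_
    intro t ht
    rw [interior_Ico] at ht
    have ht' : t ∈ Set.Ico x₀ b := ⟨ht.1.le, ht.2⟩
    rw [heq t ht']
    exact mul_pos (sub_pos.mpr (hqγ t ht')) (hupos t ht')
  have hvpos : ∀ t ∈ Set.Ioo x₀ b, 0 < v t := by
    intro t ht
    rw [← hv0]
    exact hvsmono hx₀ ⟨ht.1.le, ht.2⟩ ht.1
  have hvnn : ∀ t ∈ Set.Ico x₀ b, 0 ≤ v t := by
    intro t ht
    rcases eq_or_lt_of_le ht.1 with h | h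
    · rw [← h, hv0]
    · exact (hvpos t ⟨h, ht.2⟩).le
  have humono : MonotoneOn u (Set.Ico x₀ b) := by
    refine monotoneOn_of_deriv_nonneg (convex_Ico _ _) hucont ?_ ?_
    · intro t ht
      rw [interior_Ico] at ht
      exact (hu t ⟨ht.1.le, ht.2⟩).differentiableWithinAt
    · intro t ht
      rw [interior_Ico] at ht
      have ht' : t ∈ Set.Ico x₀ b := ⟨ht.1.le, ht.2⟩
      have h1 : 0 ≤ p t * deriv u t := hvnn t ht'
      have h2 := hppos t ht'
      by_contra h; push_neg at h
      nlinarith [mul_pos h2 (neg_pos.mpr h)]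
  refine ⟨humono, hvsmono.monotoneOn, hvpos, ?_⟩
  intro c hc
  refine ⟨hvpos c hc, ?_⟩
  intro x hx
  have hcx : c ≤ x := hx.1.le
  have hcIco : c ∈ Set.Ico x₀ b := ⟨hc.1.le, hc.2⟩
  have hsub : Set.Icc c x ⊆ Set.Ico x₀ b := fun t ht =>
    ⟨hc.1.le.trans ht.1, lt_of_le_of_lt ht.2 hx.2⟩
  have hpne : ∀ t ∈ Set.Icc c x, p t ≠ 0 := fun t ht => (hppos t (hsub ht)).ne'
  have hderiv_eq : ∀ t ∈ Set.Icc c x, deriv u t = v t / p t := by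
    intro t ht
    rw [hv_def]
    exact (mul_div_cancel_left₀ _ (hpne t ht)).symm
  have hcontd : ContinuousOn (deriv u) (Set.Icc c x) := by
    refine ContinuousOn.congr (((hvcont.mono hsub)).div (hp.mono hsub) hpne) hderiv_eq
  have huIcc : Set.uIcc c x = Set.Icc c x := Set.uIcc_of_le hcx
  have hint1 : IntervalIntegrable (deriv u) MeasureTheory.volume c x :=
    ContinuousOn.intervalIntegrable (by rw [huIcc]; exact hcontd)
  have hcont2 : ContinuousOn (fun t => v c / p t) (Set.Icc c x) :=
    continuousOn_const.div (hp.mono hsub) hpne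
  have hint2 : IntervalIntegrable (fun t => v c / p t) MeasureTheory.volume c x :=
    ContinuousOn.intervalIntegrable (by rw [huIcc]; exact hcont2)
  have hftc : ∫ t in c..x, deriv u t = u x - u c := by
    apply intervalIntegral.integral_deriv_eq_sub _ hint1
    intro t ht
    rw [huIcc] at ht
    exact hu t (hsub ht)
  have hmono_int : (∫ t in c..x, v c / p t) ≤ ∫ t in c..x, deriv u t := by
    refine intervalIntegral.integral_mono_on hcx hint2 hint1 ?_
    intro t ht
    rw [hderiv_eq t ht]
    have hvle : v c ≤ v t := hvsmono.monotoneOn hcIco (hsub ht) ht.1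
    have hpt := hppos t (hsub ht)
    gcongr
  have heqint : (∫ t in c..x, v c / p t) = v c * ∫ t in c..x, 1 / p t := by
    rw [← intervalIntegral.integral_const_mul]
    congr 1
    ext t
    ring
  have hu0c : u x₀ ≤ u c := humono hx₀ hcIco hc.1.le
  have : v c * ∫ t in c..x, 1 / p t ≤ u x - u c := by
    rw [← hftc, ← heqint]; exact hmono_int
  show u x₀ + v c * ∫ t in c..x, 1 / p t ≤ u x
  linarith
end

section
/- (Weidmann-type limit point criterion.) Let x₀ < b be reals, let p, q : ℝ → ℝ be continuous on [x₀, b) with p > 0 on [x₀, b), and let γ ∈ ℝ with q(t) > γ for all t ∈ [x₀, b). Let u : ℝ → ℝ be differentiable on [x₀, b) with t ↦ p(t)·(deriv u)(t) differentiable on [x₀, b), satisfying deriv(t ↦ p(t)·(deriv u)(t))(x) = (q(x) − γ)·u(x) for all x ∈ [x₀, b), with u(x₀) = 1 and (deriv u)(x₀) = 0. If for some c ∈ (x₀, b) the function x ↦ ∫_c^x dt/p(t) has non-integrable square on (c,b) (it is not in L²(c,b)), then u² is not integrable on (c,b), i.e. u ∉ L²(c,b). -/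
/-!
The flux `v = p u'` satisfies `v' = (q - γ) u`. The energy `u v` has derivative
`p u'² + (q - γ) u² ≥ 0` and vanishes at `x₀`, so `u u' ≥ 0`: `u²` is nondecreasing and,
`u` being continuous with `u x₀ = 1`, `u ≥ 1`. Hence `v' > 0`, so `v ≥ v c > 0` on `[c, b)`, and
integrating `u' = v / p` from `c` gives `u x ≥ v c · ∫_c^x dt/p ≥ 0`. Squaring, `u ∈ L²(c, b)`
would put `x ↦ ∫_c^x dt/p` in `L²(c, b)`.
-/

open MeasureTheory Set

theorem monotoneOn_Ico_of_hasDerivAt_nonneg {a b : ℝ} {f f' : ℝ → ℝ}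
    (hf : ∀ t ∈ Ico a b, HasDerivAt f (f' t) t) (hf' : ∀ t ∈ Ico a b, 0 ≤ f' t) :
    MonotoneOn f (Ico a b) := by
  refine monotoneOn_of_hasDerivWithinAt_nonneg (f' := f') (convex_Ico a b)
    (fun t ht => (hf t ht).continuousAt.continuousWithinAt) ?_ ?_ <;> rw [interior_Ico]
  · exact fun t ht => (hf t (Ioo_subset_Ico_self ht)).hasDerivWithinAt
  · exact fun t ht => hf' t (Ioo_subset_Ico_self ht)

theorem strictMonoOn_Ico_of_hasDerivAt_pos {a b : ℝ} {f f' : ℝ → ℝ}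
    (hf : ∀ t ∈ Ico a b, HasDerivAt f (f' t) t) (hf' : ∀ t ∈ Ico a b, 0 < f' t) :
    StrictMonoOn f (Ico a b) := by
  refine strictMonoOn_of_hasDerivWithinAt_pos (f' := f') (convex_Ico a b)
    (fun t ht => (hf t ht).continuousAt.continuousWithinAt) ?_ ?_ <;> rw [interior_Ico]
  · exact fun t ht => (hf t (Ioo_subset_Ico_self ht)).hasDerivWithinAt
  · exact fun t ht => hf' t (Ioo_subset_Ico_self ht)

theorem one_le_of_mul_deriv_nonneg {a b : ℝ} {u : ℝ → ℝ}
    (hu : ∀ t ∈ Ico a b, DifferentiableAt ℝ u t) (hua : u a = 1)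
    (huu' : ∀ t ∈ Ico a b, 0 ≤ u t * deriv u t) :
    ∀ t ∈ Ico a b, 1 ≤ u t := by
  have hsq : MonotoneOn (fun t => u t ^ 2) (Ico a b) :=
    monotoneOn_Ico_of_hasDerivAt_nonneg (fun t ht => (hu t ht).hasDerivAt.pow 2)
      fun t ht => by simpa [mul_assoc] using mul_nonneg zero_le_two (huu' t ht)
  intro t ht
  have ha : a ∈ Ico a b := ⟨le_rfl, ht.1.trans_lt ht.2⟩
  have hsq_ge : ∀ s ∈ Ico a b, 1 ≤ u s ^ 2 := fun s hs => by
    simpa [hua] using hsq ha hs hs.1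
  by_contra! hlt
  -- `u` would have to cross zero between `a` and `t`, where `u ^ 2 ≥ 1`.
  have hcross : (0 : ℝ) ∈ Icc (u t) (u a) :=
    ⟨by nlinarith [hsq_ge t ht], by rw [hua]; exact zero_le_one⟩
  obtain ⟨s, hs, hus⟩ := isPreconnected_Ico.intermediate_value ht ha
    (fun s hs => (hu s hs).continuousAt.continuousWithinAt) hcross
  exact absurd (hsq_ge s hs) (by simp [hus])

theorem continuousOn_primitive_Ico {a b : ℝ} {f : ℝ → ℝ} (hf : ContinuousOn f (Ico a b)) :
    ContinuousOn (fun x => ∫ t in a..x, f t) (Ico a b) := by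
  intro x hx
  obtain ⟨y, hxy, hyb⟩ := exists_between hx.2
  have hay : a ≤ y := hx.1.trans hxy.le
  have hint : IntervalIntegrable f volume a y :=
    (hf.mono fun t ht => ⟨ht.1, ht.2.trans_lt hyb⟩).intervalIntegrable_of_Icc hay
  have hcont := intervalIntegral.continuousOn_primitive_interval' hint left_mem_uIcc
  rw [uIcc_of_le hay] at hcont
  exact (hcont x ⟨hx.1, hxy.le⟩).mono_of_mem_nhdsWithin
    (mem_nhdsWithin.2 ⟨Iio y, isOpen_Iio, hxy, fun t ht => ⟨ht.2.1, ht.1.le⟩⟩)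

theorem mul_integral_inv_le_sub {c x m : ℝ} {p u : ℝ → ℝ} (hcx : c ≤ x)
    (hp : ContinuousOn p (Icc c x)) (hppos : ∀ t ∈ Icc c x, 0 < p t)
    (hu : ∀ t ∈ Icc c x, DifferentiableAt ℝ u t) (hm : ∀ t ∈ Icc c x, m ≤ p t * deriv u t) :
    m * ∫ t in c..x, 1 / p t ≤ u x - u c := by
  rw [← intervalIntegral.integral_const_mul]
  refine intervalIntegral.integral_le_sub_of_hasDeriv_right_of_le hcx
    (fun t ht => (hu t ht).continuousAt.continuousWithinAt)
    (fun t ht => (hu t (Ioo_subset_Icc_self ht)).hasDerivAt.hasDerivWithinAt)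
    ((continuousOn_const.mul
      (continuousOn_const.div hp fun t ht => (hppos t ht).ne')).integrableOn_Icc)
    fun t ht => ?_
  have ht' := Ioo_subset_Icc_self ht
  rw [mul_one_div, div_le_iff₀ (hppos t ht'), mul_comm]
  exact hm t ht'

theorem integrableOn_sq_of_mul_le {α : Type*} [MeasurableSpace α] {μ : Measure α} {s : Set α}
    {f g : α → ℝ} {m : ℝ} (hm : 0 < m) (hs : MeasurableSet s)
    (hg : AEStronglyMeasurable g (μ.restrict s)) (hf : IntegrableOn (fun x => f x ^ 2) s μ)
    (hg0 : ∀ x ∈ s, 0 ≤ g x) (hgf : ∀ x ∈ s, m * g x ≤ f x) :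
    IntegrableOn (fun x => g x ^ 2) s μ := by
  refine (hf.const_mul (m⁻¹ ^ 2)).mono' (hg.pow 2) ?_
  rw [ae_restrict_iff' hs]
  refine .of_forall fun x hx => ?_
  have hsq : (m * g x) ^ 2 ≤ f x ^ 2 :=
    pow_le_pow_left₀ (mul_nonneg hm.le (hg0 x hx)) (hgf x hx) 2
  rw [mul_pow] at hsq
  rw [Real.norm_eq_abs, abs_of_nonneg (sq_nonneg _)]
  calc g x ^ 2 = m⁻¹ ^ 2 * (m ^ 2 * g x ^ 2) := by field_simp
    _ ≤ m⁻¹ ^ 2 * f x ^ 2 := by gcongr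

section SturmLiouville

variable {x₀ b γ : ℝ} {p q u : ℝ → ℝ}

theorem mul_flux_nonneg (hu : ∀ t ∈ Ico x₀ b, DifferentiableAt ℝ u t)
    (hflux : ∀ t ∈ Ico x₀ b, HasDerivAt (fun s => p s * deriv u s) ((q t - γ) * u t) t)
    (hp : ∀ t ∈ Ico x₀ b, 0 ≤ p t) (hq : ∀ t ∈ Ico x₀ b, γ ≤ q t) (hu'0 : deriv u x₀ = 0) :
    ∀ t ∈ Ico x₀ b, 0 ≤ u t * (p t * deriv u t) := by
  have hmono : MonotoneOn (fun s => u s * (p s * deriv u s)) (Ico x₀ b) :=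
    monotoneOn_Ico_of_hasDerivAt_nonneg (fun t ht => (hu t ht).hasDerivAt.mul (hflux t ht))
      fun t ht => by
        have := mul_nonneg (hp t ht) (sq_nonneg (deriv u t))
        have := mul_nonneg (sub_nonneg.2 (hq t ht)) (sq_nonneg (u t))
        nlinarith
  intro t ht
  simpa [hu'0] using hmono ⟨le_rfl, ht.1.trans_lt ht.2⟩ ht ht.1

theorem one_le_solution (hu : ∀ t ∈ Ico x₀ b, DifferentiableAt ℝ u t)
    (hflux : ∀ t ∈ Ico x₀ b, HasDerivAt (fun s => p s * deriv u s) ((q t - γ) * u t) t)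
    (hp : ∀ t ∈ Ico x₀ b, 0 < p t) (hq : ∀ t ∈ Ico x₀ b, γ ≤ q t)
    (hu0 : u x₀ = 1) (hu'0 : deriv u x₀ = 0) :
    ∀ t ∈ Ico x₀ b, 1 ≤ u t := by
  have henergy := mul_flux_nonneg hu hflux (fun t ht => (hp t ht).le) hq hu'0
  refine one_le_of_mul_deriv_nonneg hu hu0 fun t ht => ?_
  have hpuu' := henergy t ht
  rw [mul_left_comm] at hpuu'
  exact nonneg_of_mul_nonneg_right hpuu' (hp t ht)

end SturmLiouville

theorem weidmann_limit_point_criterion_general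
    (x₀ b : ℝ)
    (p q : ℝ → ℝ)
    (hp : ContinuousOn p (Set.Ico x₀ b))
    (hppos : ∀ t ∈ Set.Ico x₀ b, 0 < p t)
    (γ : ℝ) (hqγ : ∀ t ∈ Set.Ico x₀ b, γ < q t)
    (u : ℝ → ℝ)
    (hu : ∀ t ∈ Set.Ico x₀ b, DifferentiableAt ℝ u t)
    (hpu : ∀ t ∈ Set.Ico x₀ b, DifferentiableAt ℝ (fun s => p s * deriv u s) t)
    (heq : ∀ t ∈ Set.Ico x₀ b,
      deriv (fun s => p s * deriv u s) t = (q t - γ) * u t)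
    (hu0 : u x₀ = 1) (hu'0 : deriv u x₀ = 0)
    (c : ℝ) (hc : c ∈ Set.Ioo x₀ b)
    (hnotL2 : ¬ IntegrableOn (fun x => (∫ t in c..x, 1 / p t) ^ 2) (Set.Ioo c b)) :
    ¬ IntegrableOn (fun x => u x ^ 2) (Set.Ioo c b) := by
  intro hu2
  apply hnotL2
  have hflux : ∀ t ∈ Ico x₀ b, HasDerivAt (fun s => p s * deriv u s) ((q t - γ) * u t) t :=
    fun t ht => heq t ht ▸ (hpu t ht).hasDerivAt
  have hu1 := one_le_solution hu hflux hppos (fun t ht => (hqγ t ht).le) hu0 hu'0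
  have hflux_mono : StrictMonoOn (fun s => p s * deriv u s) (Ico x₀ b) :=
    strictMonoOn_Ico_of_hasDerivAt_pos hflux fun t ht =>
      mul_pos (sub_pos.2 (hqγ t ht)) (zero_lt_one.trans_le (hu1 t ht))
  have hcmem : c ∈ Ico x₀ b := Ioo_subset_Ico_self hc
  have hflux_c : 0 < p c * deriv u c := by
    simpa [hu'0] using hflux_mono ⟨le_rfl, hc.1.trans hc.2⟩ hcmem hc.1
  refine integrableOn_sq_of_mul_le hflux_c measurableSet_Ioo ?_ hu2 (fun x hx => ?_) fun x hx => ?_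
  · have hinv : ContinuousOn (fun t => 1 / p t) (Ico c b) :=
      (continuousOn_const.div hp fun t ht => (hppos t ht).ne').mono (Ico_subset_Ico_left hc.1.le)
    exact ((continuousOn_primitive_Ico hinv).mono Ioo_subset_Ico_self).aestronglyMeasurable
      measurableSet_Ioo
  · exact intervalIntegral.integral_nonneg hx.1.le fun t ht =>
      (one_div_pos.2 (hppos t ⟨hc.1.le.trans ht.1, ht.2.trans_lt hx.2⟩)).le
  · have hIcc : Icc c x ⊆ Ico x₀ b := fun t ht => ⟨hc.1.le.trans ht.1, ht.2.trans_lt hx.2⟩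
    have hcompare := mul_integral_inv_le_sub hx.1.le (hp.mono hIcc) (fun t ht => hppos t (hIcc ht))
      (fun t ht => hu t (hIcc ht)) fun t ht =>
        hflux_mono.monotoneOn hcmem (hIcc ht) ht.1
    linarith [hu1 c hcmem]

/-- Weidmann-type limit point criterion: if the solution `u` of `(p·u')' = (q − γ)·u`
on `[x₀,b)` with `u(x₀) = 1`, `u'(x₀) = 0` exists, `q > γ`, `p > 0`, and for some
`c ∈ (x₀,b)` the function `x ↦ ∫_c^x dt/p(t)` is not square-integrable on `(c,b)`,
then `u ∉ L²(c,b)`. -/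
theorem weidmann_limit_point_criterion
    (x₀ b : ℝ) (hx₀b : x₀ < b)
    (p q : ℝ → ℝ)
    (hp : ContinuousOn p (Set.Ico x₀ b)) (hq : ContinuousOn q (Set.Ico x₀ b))
    (hppos : ∀ t ∈ Set.Ico x₀ b, 0 < p t)
    (γ : ℝ) (hqγ : ∀ t ∈ Set.Ico x₀ b, γ < q t)
    (u : ℝ → ℝ)
    (hu : ∀ t ∈ Set.Ico x₀ b, DifferentiableAt ℝ u t)
    (hpu : ∀ t ∈ Set.Ico x₀ b, DifferentiableAt ℝ (fun s => p s * deriv u s) t)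
    (heq : ∀ t ∈ Set.Ico x₀ b,
      deriv (fun s => p s * deriv u s) t = (q t - γ) * u t)
    (hu0 : u x₀ = 1) (hu'0 : deriv u x₀ = 0)
    (c : ℝ) (hc : c ∈ Set.Ioo x₀ b)
    (hnotL2 : ¬ IntegrableOn (fun x => (∫ t in c..x, 1 / p t) ^ 2) (Set.Ioo c b)) :
    ¬ IntegrableOn (fun x => u x ^ 2) (Set.Ioo c b) :=
  weidmann_limit_point_criterion_general x₀ b p q hp hppos γ hqγ u hu hpu heq hu0 hu'0 c hc hnotL2
end

section
/- Let c < b be reals, let p : ℝ → ℝ be continuous on [c,b) with p > 0 on [c,b), and let q : ℝ → ℝ be continuous on [c,b) with q(t) > γ for all t ∈ [c,b) for some γ ∈ ℝ. Suppose the function t ↦ (b−t)/√(p(t)) is not integrable on (c,b). Let u : ℝ → ℝ be differentiable on [c,b) with t ↦ p(t)·(deriv u)(t) differentiable on [c,b), satisfying deriv(t ↦ p(t)·(deriv u)(t))(x) = (q(x) − γ)·u(x) for all x ∈ [c,b), with u(c) = 1 and (deriv u)(c) = 0. Then u² is not integrable on (c,b); hence the endpoint b is in the limit point case. -/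
/-!
Since `(p u')' = (q - γ) u`, a continuity argument shows that `u` and its quasi-derivative
`p u'` stay positive and nondecreasing on `[c, b)`. Pick `t₀ ∈ (c, b)`, so `m := (p u')(t₀) > 0`.
On `[t₀, b)` we get `1 / (p u²) ≤ m⁻¹ u' / u² = m⁻¹ (-1 / u)'` with `-1 / u` bounded, hence
`1 / (p u²)` is integrable near `b`. Finally
`(b - t) / √p = (b - t) u · (√p u)⁻¹ ≤ (b - c)² u² + 1 / (p u²)`,
so integrability of `u²` would force that of `(b - t) / √p`.
-/

open MeasureTheory Set Filter Topology

theorem ContinuousOn.forall_Ico_pos_of_step {α : Type*} [ConditionallyCompleteLinearOrder α]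
    [TopologicalSpace α] [OrderTopology α] {f : α → ℝ} {a b : α} (hf : ContinuousOn f (Ico a b))
    (hstep : ∀ s ∈ Ico a b, (∀ t ∈ Ico a s, 0 < f t) → 0 < f s) :
    ∀ s ∈ Ico a b, 0 < f s := by
  intro s₀ hs₀
  by_contra! hs₀f
  set Z := Icc a s₀ ∩ f ⁻¹' Iic 0
  have hZ : IsClosed Z :=
    (hf.mono (Icc_subset_Ico_right hs₀.2)).preimage_isClosed_of_isClosed isClosed_Icc isClosed_Iic
  have hZbdd : BddBelow Z := ⟨a, fun t ht => ht.1.1⟩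
  have hmem : sInf Z ∈ Z := hZ.csInf_mem ⟨s₀, ⟨hs₀.1, le_rfl⟩, hs₀f⟩ hZbdd
  refine not_lt.2 hmem.2 (hstep _ ⟨hmem.1.1, hmem.1.2.trans_lt hs₀.2⟩ fun t ht => ?_)
  by_contra! htf
  exact ht.2.not_ge (csInf_le hZbdd ⟨⟨ht.1, ht.2.le.trans hmem.1.2⟩, htf⟩)

theorem monotoneOn_of_differentiableAt_of_deriv_nonneg {f : ℝ → ℝ} {D : Set ℝ} (hD : Convex ℝ D)
    (hf : ∀ x ∈ D, DifferentiableAt ℝ f x) (hf' : ∀ x ∈ interior D, 0 ≤ deriv f x) :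
    MonotoneOn f D :=
  monotoneOn_of_deriv_nonneg hD (fun x hx => (hf x hx).continuousAt.continuousWithinAt)
    (fun x hx => (hf x (interior_subset hx)).differentiableWithinAt) hf'

theorem integrableOn_Ioo_deriv_of_nonneg_of_le {g g' : ℝ → ℝ} {a b M : ℝ}
    (hderiv : ∀ x ∈ Ico a b, HasDerivAt g (g' x) x) (hg' : ∀ x ∈ Ioo a b, 0 ≤ g' x)
    (hM : ∀ x ∈ Ico a b, g x ≤ M) : IntegrableOn g' (Ioo a b) := by
  rcases le_or_gt b a with hba | hab
  · simp [Ioo_eq_empty_of_le hba]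
  obtain ⟨x, -, hx, hxb⟩ := exists_seq_strictMono_tendsto' hab
  have hsub : ∀ n, Icc a (x n) ⊆ Ico a b := fun n => Icc_subset_Ico_right (hx n).2
  have hint : ∀ n, IntegrableOn g' (Ioc a (x n)) := fun n =>
    intervalIntegral.integrableOn_deriv_of_nonneg
      (fun y hy => (hderiv y (hsub n hy)).continuousAt.continuousWithinAt)
      (fun y hy => hderiv y (hsub n (Ioo_subset_Icc_self hy)))
      (fun y hy => hg' y ⟨hy.1, hy.2.trans (hx n).2⟩)
  refine (integrableOn_Ioc_of_intervalIntegral_norm_bounded_right (I := M - g a) hint hxb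
    (Eventually.of_forall fun n => ?_)).mono_set Ioo_subset_Ioc_self
  calc ∫ y in Ioc a (x n), ‖g' y‖ = ∫ y in a..x n, g' y := by
        rw [intervalIntegral.integral_of_le (hx n).1.le]
        exact setIntegral_congr_fun measurableSet_Ioc fun y hy =>
          Real.norm_of_nonneg (hg' y ⟨hy.1, hy.2.trans_lt (hx n).2⟩)
    _ = g (x n) - g a := by
        refine intervalIntegral.integral_eq_sub_of_hasDerivAt (fun y hy => hderiv y (hsub n ?_))
          ((intervalIntegrable_iff_integrableOn_Ioc_of_le (hx n).1.le).2 (hint n))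
        rwa [uIcc_of_le (hx n).1.le] at hy
    _ ≤ M - g a := by linarith [hM (x n) (hsub n (right_mem_Icc.2 (hx n).1.le))]

theorem integrableOn_Ioo_deriv_div_sq {u : ℝ → ℝ} {a b : ℝ}
    (hu : ∀ x ∈ Ico a b, DifferentiableAt ℝ u x) (hpos : ∀ x ∈ Ico a b, 0 < u x)
    (hu' : ∀ x ∈ Ioo a b, 0 ≤ deriv u x) :
    IntegrableOn (fun x => deriv u x / u x ^ 2) (Ioo a b) := by
  refine integrableOn_Ioo_deriv_of_nonneg_of_le (g := fun x => -(u x)⁻¹) (M := 0)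
    (fun x hx => ?_) (fun x hx => div_nonneg (hu' x hx) (sq_nonneg _))
    fun x hx => by simpa using (hpos x hx).le
  simpa [neg_div] using ((hu x hx).hasDerivAt.fun_inv (hpos x hx).ne').fun_neg

theorem div_sqrt_le_sq_mul_sq_add_inv (a x y : ℝ) (hx : 0 < x) (hy : y ≠ 0) :
    a / √x ≤ a ^ 2 * y ^ 2 + (x * y ^ 2)⁻¹ := by
  have hsx : 0 < √x := Real.sqrt_pos.2 hx
  have hfactor : a / √x = (a * y) * (√x * y)⁻¹ := by field_simp
  have hsq : ((√x * y)⁻¹) ^ 2 = (x * y ^ 2)⁻¹ := by rw [inv_pow, mul_pow, Real.sq_sqrt hx.le]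
  rw [hfactor, ← hsq, ← mul_pow]
  nlinarith [two_mul_le_add_sq (a * y) (√x * y)⁻¹]

theorem inv_mul_sq_le_of_le_mul {x y z m : ℝ} (hm : 0 < m) (hx : 0 < x) (h : m ≤ x * z) :
    (x * y ^ 2)⁻¹ ≤ m⁻¹ * (z / y ^ 2) :=
  calc (x * y ^ 2)⁻¹ = m⁻¹ * (m * (x * y ^ 2)⁻¹) := (inv_mul_cancel_left₀ hm.ne' _).symm
    _ ≤ m⁻¹ * (x * z * (x * y ^ 2)⁻¹) := by gcongr
    _ = m⁻¹ * (z / y ^ 2) := by rw [mul_inv, div_eq_mul_inv]; field_simp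

noncomputable def quasiDeriv (p u : ℝ → ℝ) (t : ℝ) : ℝ := p t * deriv u t

structure SolvesSturmLiouville (p q : ℝ → ℝ) (γ : ℝ) (s : Set ℝ) (u : ℝ → ℝ) : Prop where
  differentiableAt : ∀ t ∈ s, DifferentiableAt ℝ u t
  differentiableAt_quasiDeriv : ∀ t ∈ s, DifferentiableAt ℝ (quasiDeriv p u) t
  deriv_quasiDeriv : ∀ t ∈ s, deriv (quasiDeriv p u) t = (q t - γ) * u t

namespace SolvesSturmLiouville

variable {p q u : ℝ → ℝ} {γ c b : ℝ} {s D : Set ℝ}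

theorem continuousOn (h : SolvesSturmLiouville p q γ s u) : ContinuousOn u s :=
  fun t ht => (h.differentiableAt t ht).continuousAt.continuousWithinAt

theorem monotoneOn_quasiDeriv (h : SolvesSturmLiouville p q γ s u) (hqγ : ∀ t ∈ s, γ ≤ q t)
    (hD : Convex ℝ D) (hDs : D ⊆ s) (hu : ∀ t ∈ interior D, 0 ≤ u t) :
    MonotoneOn (quasiDeriv p u) D :=
  monotoneOn_of_differentiableAt_of_deriv_nonneg hD
    (fun t ht => h.differentiableAt_quasiDeriv t (hDs ht)) fun t ht => by
      rw [h.deriv_quasiDeriv t (hDs (interior_subset ht))]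
      exact mul_nonneg (sub_nonneg.2 (hqγ t (hDs (interior_subset ht)))) (hu t ht)

theorem quasiDeriv_nonneg (h : SolvesSturmLiouville p q γ s u) (hqγ : ∀ t ∈ s, γ ≤ q t)
    (hD : Convex ℝ D) (hDs : D ⊆ s) (hc : IsLeast D c) (hu'c : deriv u c = 0)
    (hu : ∀ t ∈ interior D, 0 ≤ u t) : ∀ t ∈ D, 0 ≤ quasiDeriv p u t := fun t ht => by
  simpa [quasiDeriv, hu'c] using h.monotoneOn_quasiDeriv hqγ hD hDs hu hc.1 ht (hc.2 ht)

theorem monotoneOn (h : SolvesSturmLiouville p q γ s u) (hqγ : ∀ t ∈ s, γ ≤ q t)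
    (hp : ∀ t ∈ s, 0 < p t) (hD : Convex ℝ D) (hDs : D ⊆ s) (hc : IsLeast D c)
    (hu'c : deriv u c = 0) (hu : ∀ t ∈ interior D, 0 ≤ u t) : MonotoneOn u D :=
  monotoneOn_of_differentiableAt_of_deriv_nonneg hD (fun t ht => h.differentiableAt t (hDs ht))
    fun t ht => (mul_nonneg_iff_of_pos_left (hp t (hDs (interior_subset ht)))).1
      (h.quasiDeriv_nonneg hqγ hD hDs hc hu'c hu t (interior_subset ht))

theorem pos (h : SolvesSturmLiouville p q γ (Ico c b) u) (hqγ : ∀ t ∈ Ico c b, γ ≤ q t)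
    (hp : ∀ t ∈ Ico c b, 0 < p t) (huc : 0 < u c) (hu'c : deriv u c = 0) :
    ∀ t ∈ Ico c b, 0 < u t := by
  refine h.continuousOn.forall_Ico_pos_of_step fun t ht hpos => ?_
  have hmono : MonotoneOn u (Icc c t) := by
    refine h.monotoneOn hqγ hp (convex_Icc c t) (Icc_subset_Ico_right ht.2) (isLeast_Icc ht.1)
      hu'c fun x hx => (hpos x ?_).le
    rw [interior_Icc] at hx
    exact Ioo_subset_Ico_self hx
  exact huc.trans_le (hmono (left_mem_Icc.2 ht.1) (right_mem_Icc.2 ht.1) ht.1)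

theorem quasiDeriv_pos (h : SolvesSturmLiouville p q γ (Ico c b) u)
    (hqγ : ∀ t ∈ Ico c b, γ < q t) (hp : ∀ t ∈ Ico c b, 0 < p t) (huc : 0 < u c)
    (hu'c : deriv u c = 0) {t₀ : ℝ} (ht₀ : t₀ ∈ Ioo c b) : 0 < quasiDeriv p u t₀ := by
  have hupos := h.pos (fun t ht => (hqγ t ht).le) hp huc hu'c
  have hsub : Icc c t₀ ⊆ Ico c b := Icc_subset_Ico_right ht₀.2
  have hmono : StrictMonoOn (quasiDeriv p u) (Icc c t₀) := by
    refine strictMonoOn_of_deriv_pos (convex_Icc c t₀)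
      (fun t ht => (h.differentiableAt_quasiDeriv t (hsub ht)).continuousAt.continuousWithinAt)
      fun t ht => ?_
    rw [interior_Icc] at ht
    have ht' : t ∈ Ico c b := hsub (Ioo_subset_Icc_self ht)
    rw [h.deriv_quasiDeriv t ht']
    exact mul_pos (sub_pos.2 (hqγ t ht')) (hupos t ht')
  simpa [quasiDeriv, hu'c] using
    hmono (left_mem_Icc.2 ht₀.1.le) (right_mem_Icc.2 ht₀.1.le) ht₀.1

theorem integrableOn_inv_mul_sq (h : SolvesSturmLiouville p q γ (Ico c b) u)
    (hp_cont : ContinuousOn p (Ico c b)) (hqγ : ∀ t ∈ Ico c b, γ < q t)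
    (hp : ∀ t ∈ Ico c b, 0 < p t) (huc : 0 < u c) (hu'c : deriv u c = 0) (hcb : c < b) :
    IntegrableOn (fun t => (p t * u t ^ 2)⁻¹) (Ioo c b) := by
  have hqγ' : ∀ t ∈ Ico c b, γ ≤ q t := fun t ht => (hqγ t ht).le
  have hupos := h.pos hqγ' hp huc hu'c
  have hmono : MonotoneOn (quasiDeriv p u) (Ico c b) :=
    h.monotoneOn_quasiDeriv hqγ' (convex_Ico c b) subset_rfl fun t ht =>
      (hupos t (interior_subset ht)).le
  obtain ⟨t₀, ht₀⟩ := exists_between hcb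
  set m := quasiDeriv p u t₀
  have hm : 0 < m := h.quasiDeriv_pos hqγ hp huc hu'c ht₀
  have hsub : Ico t₀ b ⊆ Ico c b := Ico_subset_Ico_left ht₀.1.le
  have hcont : ContinuousOn (fun t => (p t * u t ^ 2)⁻¹) (Ico c b) :=
    (hp_cont.mul (h.continuousOn.pow 2)).inv₀ fun t ht =>
      (mul_pos (hp t ht) (pow_pos (hupos t ht) 2)).ne'
  have hu' : ∀ t ∈ Ico t₀ b, m ≤ p t * deriv u t := fun t ht =>
    hmono ⟨ht₀.1.le, ht₀.2⟩ (hsub ht) ht.1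
  have hint : IntegrableOn (fun t => deriv u t / u t ^ 2) (Ioo t₀ b) :=
    integrableOn_Ioo_deriv_div_sq (fun t ht => h.differentiableAt t (hsub ht))
      (fun t ht => hupos t (hsub ht)) fun t ht =>
        (mul_nonneg_iff_of_pos_left (hp t (hsub (Ioo_subset_Ico_self ht)))).1
          (hm.le.trans (hu' t (Ioo_subset_Ico_self ht)))
  have hint₀ : IntegrableOn (fun t => (p t * u t ^ 2)⁻¹) (Ioo t₀ b) := by
    refine (hint.const_mul m⁻¹).mono'
      ((hcont.mono (Ioo_subset_Ico_self.trans hsub)).aestronglyMeasurable measurableSet_Ioo) ?_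
    rw [ae_restrict_iff' measurableSet_Ioo]
    refine ae_of_all _ fun t ht => ?_
    have ht' := hsub (Ioo_subset_Ico_self ht)
    rw [Real.norm_of_nonneg (inv_nonneg.2 (mul_pos (hp t ht') (pow_pos (hupos t ht') 2)).le)]
    exact inv_mul_sq_le_of_le_mul hm (hp t ht') (hu' t (Ioo_subset_Ico_self ht))
  rw [← Ioc_union_Ioo_eq_Ioo ht₀.1.le ht₀.2]
  exact ((hcont.mono (Icc_subset_Ico_right ht₀.2)).integrableOn_Icc.mono_set
    Ioc_subset_Icc_self).union hint₀

end SolvesSturmLiouville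

theorem limit_point_of_not_integrable_weighted_general
    (c b : ℝ) (hcb : c < b)
    (p q : ℝ → ℝ)
    (hp : ContinuousOn p (Set.Ico c b))
    (hppos : ∀ t ∈ Set.Ico c b, 0 < p t)
    (γ : ℝ) (hqγ : ∀ t ∈ Set.Ico c b, γ < q t)
    (hnotint : ¬ IntegrableOn (fun t => (b - t) / Real.sqrt (p t)) (Set.Ioo c b))
    (u : ℝ → ℝ)
    (hu : ∀ t ∈ Set.Ico c b, DifferentiableAt ℝ u t)
    (hpu : ∀ t ∈ Set.Ico c b, DifferentiableAt ℝ (fun s => p s * deriv u s) t)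
    (heq : ∀ t ∈ Set.Ico c b,
      deriv (fun s => p s * deriv u s) t = (q t - γ) * u t)
    (hu0 : u c = 1) (hu'0 : deriv u c = 0) :
    ¬ IntegrableOn (fun x => u x ^ 2) (Set.Ioo c b) := by
  intro hu2
  have hsol : SolvesSturmLiouville p q γ (Ico c b) u := ⟨hu, hpu, heq⟩
  have huc : 0 < u c := hu0 ▸ one_pos
  have hupos := hsol.pos (fun t ht => (hqγ t ht).le) hppos huc hu'0
  have hinv := hsol.integrableOn_inv_mul_sq hp hqγ hppos huc hu'0 hcb
  refine hnotint (((hu2.const_mul ((b - c) ^ 2)).add hinv).mono' ?_ ?_)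
  · exact (((continuousOn_const.sub continuousOn_id).div hp.sqrt fun t ht =>
      (Real.sqrt_pos.2 (hppos t ht)).ne').mono Ioo_subset_Ico_self).aestronglyMeasurable
      measurableSet_Ioo
  rw [ae_restrict_iff' measurableSet_Ioo]
  refine ae_of_all _ fun t ht => ?_
  have ht' := Ioo_subset_Ico_self ht
  rw [Real.norm_of_nonneg (div_nonneg (sub_nonneg.2 ht.2.le) (Real.sqrt_nonneg _))]
  calc (b - t) / √(p t) ≤ (b - t) ^ 2 * u t ^ 2 + (p t * u t ^ 2)⁻¹ :=
        div_sqrt_le_sq_mul_sq_add_inv _ _ _ (hppos t ht') (hupos t ht').ne'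
    _ ≤ (b - c) ^ 2 * u t ^ 2 + (p t * u t ^ 2)⁻¹ := by
        gcongr
        · linarith [ht.2]
        · linarith [ht.1]

/-- If `(b−t)/√(p(t))` is not integrable on `(c,b)`, then the solution `u` of
`(p·u')' = (q − γ)·u` on `[c,b)` with `u(c) = 1`, `u'(c) = 0` is not in `L²(c,b)`;
hence the endpoint `b` is in the limit point case. -/
theorem limit_point_of_not_integrable_weighted
    (c b : ℝ) (hcb : c < b)
    (p q : ℝ → ℝ)
    (hp : ContinuousOn p (Set.Ico c b)) (hq : ContinuousOn q (Set.Ico c b))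
    (hppos : ∀ t ∈ Set.Ico c b, 0 < p t)
    (γ : ℝ) (hqγ : ∀ t ∈ Set.Ico c b, γ < q t)
    (hnotint : ¬ IntegrableOn (fun t => (b - t) / Real.sqrt (p t)) (Set.Ioo c b))
    (u : ℝ → ℝ)
    (hu : ∀ t ∈ Set.Ico c b, DifferentiableAt ℝ u t)
    (hpu : ∀ t ∈ Set.Ico c b, DifferentiableAt ℝ (fun s => p s * deriv u s) t)
    (heq : ∀ t ∈ Set.Ico c b,
      deriv (fun s => p s * deriv u s) t = (q t - γ) * u t)
    (hu0 : u c = 1) (hu'0 : deriv u c = 0) :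
    ¬ IntegrableOn (fun x => u x ^ 2) (Set.Ioo c b) :=
  limit_point_of_not_integrable_weighted_general c b hcb p q hp hppos γ hqγ hnotint u hu hpu heq hu0
    hu'0
end

section
/- (Limit point direction of the degenerate-coefficient criterion.) Let c < b be reals, let n ≥ 2 be a natural number, let φ : ℝ → ℝ be continuously differentiable on [c,b] with φ(t) > 0 for all t ∈ [c,b], and set p(t) = (b−t)^n·φ(t). Let q : ℝ → ℝ be continuous on [c,b] and let γ ∈ ℝ with q(t) > γ for all t ∈ [c,b). Let u : ℝ → ℝ be differentiable on [c,b) with t ↦ p(t)·(deriv u)(t) differentiable on [c,b), satisfying deriv(t ↦ p(t)·(deriv u)(t))(x) = (q(x) − γ)·u(x) for all x ∈ [c,b), with u(c) = 1 and (deriv u)(c) = 0. Then u² is not integrable on (c,b); hence when p vanishes at b to order n ≥ 2, the endpoint b is in the limit point case. -/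
/-!
Write `v = p u'` for the flux. Since `v' = (q - γ) u` with `q > γ`, the flux grows as long
as `u` stays nonnegative, and then `u' = v / p ≥ 0`; starting from `u(c) = 1`, `v(c) = 0`, a
first-zero argument shows `u ≥ 1` on `[c, b)`, so that `v` is strictly increasing and bounded
below by some `K > 0` on `[t₀, b)`. As `p ≤ M (b - t)²` near `b` when `n ≥ 2`, this gives
`u' ≥ (K / M) / (b - t)²`, hence `u(t) ≥ (K / M) / (b - t) - D`. Since `u ≥ 1` also gives
`u ≤ u²`, the non-integrable function `1 / (b - t)` would be dominated by `u² + D`.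
-/

open MeasureTheory Set

/-- Pointwise form of `(p u')' = r u` on `s`, with `r` standing for `q - γ`; `p u'` is the flux. -/
structure SolvesSturmLiouvilleOn (p r u : ℝ → ℝ) (s : Set ℝ) : Prop where
  differentiableAt : ∀ t ∈ s, DifferentiableAt ℝ u t
  differentiableAt_flux : ∀ t ∈ s, DifferentiableAt ℝ (fun x => p x * deriv u x) t
  deriv_flux : ∀ t ∈ s, deriv (fun x => p x * deriv u x) t = r t * u t

namespace SolvesSturmLiouvilleOn

variable {p r u : ℝ → ℝ} {s s' : Set ℝ} {c b : ℝ}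

theorem mono (h : SolvesSturmLiouvilleOn p r u s) (hs : s' ⊆ s) :
    SolvesSturmLiouvilleOn p r u s' :=
  ⟨fun t ht => h.differentiableAt t (hs ht), fun t ht => h.differentiableAt_flux t (hs ht),
    fun t ht => h.deriv_flux t (hs ht)⟩

theorem differentiableOn (h : SolvesSturmLiouvilleOn p r u s) : DifferentiableOn ℝ u s :=
  fun t ht => (h.differentiableAt t ht).differentiableWithinAt

theorem differentiableOn_flux (h : SolvesSturmLiouvilleOn p r u s) :
    DifferentiableOn ℝ (fun x => p x * deriv u x) s :=
  fun t ht => (h.differentiableAt_flux t ht).differentiableWithinAt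

theorem one_le_of_nonneg (h : SolvesSturmLiouvilleOn p r u (Icc c b)) (hcb : c ≤ b)
    (hp : ∀ t ∈ Ioo c b, 0 < p t) (hr : ∀ t ∈ Ioo c b, 0 ≤ r t)
    (hu : ∀ t ∈ Ioo c b, 0 ≤ u t) (hu0 : u c = 1) (hu'0 : deriv u c = 0) : 1 ≤ u b := by
  have hflux : MonotoneOn (fun x => p x * deriv u x) (Icc c b) :=
    monotoneOn_of_deriv_nonneg (convex_Icc c b) h.differentiableOn_flux.continuousOn
      (h.differentiableOn_flux.mono interior_subset) fun t ht => by
        rw [interior_Icc] at ht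
        rw [h.deriv_flux t (Ioo_subset_Icc_self ht)]
        exact mul_nonneg (hr t ht) (hu t ht)
  have hu' : ∀ t ∈ Ioo c b, 0 ≤ deriv u t := fun t ht =>
    nonneg_of_mul_nonneg_right (by
      simpa [hu'0] using hflux (left_mem_Icc.2 hcb) (Ioo_subset_Icc_self ht) ht.1.le) (hp t ht)
  have hmono : MonotoneOn u (Icc c b) :=
    monotoneOn_of_deriv_nonneg (convex_Icc c b) h.differentiableOn.continuousOn
      (h.differentiableOn.mono interior_subset) fun t ht => hu' t (by rwa [interior_Icc] at ht)
  simpa [hu0] using hmono (left_mem_Icc.2 hcb) (right_mem_Icc.2 hcb) hcb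

theorem one_le (h : SolvesSturmLiouvilleOn p r u (Ico c b))
    (hp : ∀ t ∈ Ioo c b, 0 < p t) (hr : ∀ t ∈ Ioo c b, 0 ≤ r t)
    (hu0 : u c = 1) (hu'0 : deriv u c = 0) : ∀ t ∈ Ico c b, 1 ≤ u t := by
  have hsub : ∀ {t}, t ∈ Ico c b → Icc c t ⊆ Ico c b := fun ht =>
    Icc_subset_Ico_right ht.2
  have hpos : ∀ t ∈ Ico c b, 0 < u t := by
    intro t ht
    by_contra! hut
    have hZ : IsClosed (Icc c t ∩ u ⁻¹' Iic 0) :=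
      (h.differentiableOn.continuousOn.mono (hsub ht)).preimage_isClosed_of_isClosed
        isClosed_Icc isClosed_Iic
    -- `s` is the first zero of `u`; before it `u` is positive, which forces `u s ≥ 1`.
    obtain ⟨s, ⟨hs, hus⟩, hmin⟩ := (isCompact_Icc.of_isClosed_subset hZ inter_subset_left)
      |>.exists_isMinOn ⟨t, ⟨right_mem_Icc.2 ht.1, hut⟩⟩ continuousOn_id
    have hpos_before : ∀ x ∈ Ioo c s, 0 ≤ u x := fun x hx => by
      by_contra! hux
      exact (hmin ⟨⟨hx.1.le, hx.2.le.trans hs.2⟩, hux.le⟩ : s ≤ x).not_gt hx.2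
    have hsb : s ∈ Ico c b := hsub ht hs
    have := (h.mono (hsub hsb)).one_le_of_nonneg hs.1
      (fun x hx => hp x ⟨hx.1, hx.2.trans hsb.2⟩)
      (fun x hx => hr x ⟨hx.1, hx.2.trans hsb.2⟩) hpos_before hu0 hu'0
    linarith [show u s ≤ 0 from hus]
  intro t ht
  exact (h.mono (hsub ht)).one_le_of_nonneg ht.1 (fun x hx => hp x ⟨hx.1, hx.2.trans ht.2⟩)
    (fun x hx => hr x ⟨hx.1, hx.2.trans ht.2⟩)
    (fun x hx => (hpos x ⟨hx.1.le, hx.2.trans ht.2⟩).le) hu0 hu'0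

theorem strictMonoOn_flux (h : SolvesSturmLiouvilleOn p r u (Ico c b))
    (hr : ∀ t ∈ Ioo c b, 0 < r t) (hu : ∀ t ∈ Ioo c b, 0 < u t) :
    StrictMonoOn (fun x => p x * deriv u x) (Ico c b) :=
  strictMonoOn_of_deriv_pos (convex_Ico c b) h.differentiableOn_flux.continuousOn fun t ht => by
    rw [interior_Ico] at ht
    rw [h.deriv_flux t (Ioo_subset_Ico_self ht)]
    exact mul_pos (hr t ht) (hu t ht)

end SolvesSturmLiouvilleOn

theorem hasDerivAt_div_sub {C b t : ℝ} (ht : t ≠ b) :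
    HasDerivAt (fun x => C / (b - x)) (C / (b - t) ^ 2) t := by
  have hbt : b - t ≠ 0 := sub_ne_zero.2 ht.symm
  have h := (((hasDerivAt_id t).const_sub b).fun_inv hbt).const_mul C
  simp only [id, neg_neg, ← div_eq_mul_inv, mul_one_div] at h
  exact h

theorem monotoneOn_sub_div_of_div_sq_le_deriv {f : ℝ → ℝ} {a b C : ℝ}
    (hf : ∀ t ∈ Ico a b, DifferentiableAt ℝ f t)
    (hf' : ∀ t ∈ Ioo a b, C / (b - t) ^ 2 ≤ deriv f t) :
    MonotoneOn (fun t => f t - C / (b - t)) (Ico a b) := by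
  have hg : ∀ t ∈ Ico a b, HasDerivAt (fun t => f t - C / (b - t))
      (deriv f t - C / (b - t) ^ 2) t := fun t ht =>
    (hf t ht).hasDerivAt.sub (hasDerivAt_div_sub ht.2.ne)
  refine monotoneOn_of_deriv_nonneg (convex_Ico a b)
    (fun t ht => (hg t ht).continuousAt.continuousWithinAt)
    (fun t ht => (hg t (interior_subset ht)).differentiableAt.differentiableWithinAt)
    fun t ht => ?_
  rw [interior_Ico] at ht
  rw [(hg t (Ioo_subset_Ico_self ht)).deriv, sub_nonneg]
  exact hf' t ht

theorem not_integrableOn_div_sub {a b C : ℝ} (hab : a < b) (hC : C ≠ 0) :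
    ¬ IntegrableOn (fun t => C / (b - t)) (Ioo a b) := by
  intro hint
  have hinv : IntegrableOn (fun t => (t - b)⁻¹) (Ioo a b) := by
    refine IntegrableOn.congr_fun (hint.const_mul (-C⁻¹)) (fun t _ => ?_) measurableSet_Ioo
    rw [← neg_sub b t, inv_neg]
    field_simp
  have : IntervalIntegrable (fun t => (t - b)⁻¹) volume a b := by
    rwa [intervalIntegrable_iff_integrableOn_Ioc_of_le hab.le,
      integrableOn_Ioc_iff_integrableOn_Ioo]
  simp [hab.ne, hab.le] at this

theorem not_integrableOn_of_div_sub_le {g : ℝ → ℝ} {a b C D : ℝ} (hab : a < b) (hC : 0 < C)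
    (hg : ∀ t ∈ Ioo a b, C / (b - t) ≤ g t + D) : ¬ IntegrableOn g (Ioo a b) := by
  intro hint
  refine not_integrableOn_div_sub hab hC.ne' <|
    Integrable.mono' (hint.add (integrableOn_const (C := D) measure_Ioo_lt_top.ne)) ?_
      ((ae_restrict_iff' measurableSet_Ioo).2 (.of_forall fun t ht => ?_))
  · exact (measurable_const.div (measurable_const.sub measurable_id)).aestronglyMeasurable
  · rw [Real.norm_of_nonneg (div_nonneg hC.le (sub_pos.2 ht.2).le)]
    exact hg t ht

theorem SolvesSturmLiouvilleOn.not_integrableOn_sq {p r u : ℝ → ℝ} {c b M : ℝ} (hcb : c < b)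
    (h : SolvesSturmLiouvilleOn p r u (Ico c b)) (hp : ∀ t ∈ Ioo c b, 0 < p t)
    (hpM : ∀ t ∈ Ioo c b, p t ≤ M * (b - t) ^ 2) (hr : ∀ t ∈ Ioo c b, 0 < r t)
    (hu0 : u c = 1) (hu'0 : deriv u c = 0) :
    ¬ IntegrableOn (fun x => u x ^ 2) (Ioo c b) := by
  have hu1 := h.one_le hp (fun t ht => (hr t ht).le) hu0 hu'0
  have ht₀ : (c + b) / 2 ∈ Ioo c b := ⟨by linarith, by linarith⟩
  set t₀ := (c + b) / 2
  have hsub : Ioo t₀ b ⊆ Ioo c b := Ioo_subset_Ioo_left ht₀.1.le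
  have hflux := h.strictMonoOn_flux hr fun t ht =>
    one_pos.trans_le (hu1 t (Ioo_subset_Ico_self ht))
  set K := p t₀ * deriv u t₀
  have hK : 0 < K := by
    simpa [hu'0] using hflux (left_mem_Ico.2 hcb) (Ioo_subset_Ico_self ht₀) ht₀.1
  have hM : 0 < M := pos_of_mul_pos_left ((hp t₀ ht₀).trans_le (hpM t₀ ht₀)) (sq_nonneg _)
  have hgrowth : ∀ t ∈ Ioo t₀ b, K / M / (b - t) ^ 2 ≤ deriv u t := by
    intro t ht
    have hKt : K ≤ p t * deriv u t :=
      hflux.monotoneOn (Ioo_subset_Ico_self ht₀) (Ioo_subset_Ico_self (hsub ht)) ht.1.le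
    have hu't : 0 ≤ deriv u t := nonneg_of_mul_nonneg_right (hK.le.trans hKt) (hp t (hsub ht))
    have hbt : 0 < b - t := sub_pos.2 ht.2
    rw [div_div, div_le_iff₀ (by positivity)]
    calc K ≤ p t * deriv u t := hKt
      _ ≤ M * (b - t) ^ 2 * deriv u t := mul_le_mul_of_nonneg_right (hpM t (hsub ht)) hu't
      _ = deriv u t * (M * (b - t) ^ 2) := mul_comm _ _
  have hmono := monotoneOn_sub_div_of_div_sq_le_deriv
    (fun t ht => h.differentiableAt t ⟨ht₀.1.le.trans ht.1, ht.2⟩) hgrowth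
  have hlower : ∀ t ∈ Ioo t₀ b, K / M / (b - t) ≤ u t ^ 2 + K / M / (b - t₀) := by
    intro t ht
    have := hmono (left_mem_Ico.2 ht₀.2) (Ioo_subset_Ico_self ht) ht.1.le
    have h₀ := hu1 t₀ (Ioo_subset_Ico_self ht₀)
    have h₁ := hu1 t (Ioo_subset_Ico_self (hsub ht))
    have hsq : u t ≤ u t ^ 2 := by nlinarith
    simp only at this
    linarith
  intro hint
  exact not_integrableOn_of_div_sub_le ht₀.2 (div_pos hK hM) hlower (hint.mono_set hsub)

theorem limit_point_of_degenerate_order_ge_two_general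
    (c b : ℝ) (hcb : c < b)
    (n : ℕ) (hn : 2 ≤ n)
    (φ : ℝ → ℝ)
    (hφ : ContDiffOn ℝ 1 φ (Set.Icc c b))
    (hφpos : ∀ t ∈ Set.Icc c b, 0 < φ t)
    (p : ℝ → ℝ) (hpdef : ∀ t, p t = (b - t) ^ n * φ t)
    (q : ℝ → ℝ)
    (γ : ℝ) (hqγ : ∀ t ∈ Set.Ico c b, γ < q t)
    (u : ℝ → ℝ)
    (hu : ∀ t ∈ Set.Ico c b, DifferentiableAt ℝ u t)
    (hpu : ∀ t ∈ Set.Ico c b, DifferentiableAt ℝ (fun s => p s * deriv u s) t)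
    (heq : ∀ t ∈ Set.Ico c b,
      deriv (fun s => p s * deriv u s) t = (q t - γ) * u t)
    (hu0 : u c = 1) (hu'0 : deriv u c = 0) :
    ¬ IntegrableOn (fun x => u x ^ 2) (Set.Ioo c b) := by
  obtain ⟨k, rfl⟩ := Nat.exists_eq_add_of_le' hn
  obtain ⟨M, hM⟩ := isCompact_Icc.bddAbove_image hφ.continuousOn
  refine SolvesSturmLiouvilleOn.not_integrableOn_sq (r := fun t => q t - γ)
    (M := (b - c) ^ k * M) hcb ⟨hu, hpu, heq⟩ (fun t ht => ?_) (fun t ht => ?_)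
    (fun t ht => sub_pos.2 (hqγ t (Ioo_subset_Ico_self ht))) hu0 hu'0
  · rw [hpdef]
    exact mul_pos (pow_pos (sub_pos.2 ht.2) _) (hφpos t (Ioo_subset_Icc_self ht))
  · rw [hpdef]
    calc (b - t) ^ (k + 2) * φ t = (b - t) ^ k * φ t * (b - t) ^ 2 := by ring
      _ ≤ (b - c) ^ k * M * (b - t) ^ 2 := by
        have := hφpos t (Ioo_subset_Icc_self ht)
        have := sub_pos.2 ht.2
        gcongr
        · exact ht.1.le
        · exact hM (mem_image_of_mem φ (Ioo_subset_Icc_self ht))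

/-- Limit point direction of the degenerate-coefficient criterion: if
`p(t) = (b−t)^n·φ(t)` with `n ≥ 2` and `φ` continuously differentiable and positive on
`[c,b]`, then the solution `u` of `(p·u')' = (q − γ)·u` on `[c,b)` with `u(c) = 1`,
`u'(c) = 0` is not in `L²(c,b)`; hence `b` is in the limit point case. -/
theorem limit_point_of_degenerate_order_ge_two
    (c b : ℝ) (hcb : c < b)
    (n : ℕ) (hn : 2 ≤ n)
    (φ : ℝ → ℝ)
    (hφ : ContDiffOn ℝ 1 φ (Set.Icc c b))
    (hφpos : ∀ t ∈ Set.Icc c b, 0 < φ t)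
    (p : ℝ → ℝ) (hpdef : ∀ t, p t = (b - t) ^ n * φ t)
    (q : ℝ → ℝ) (hq : ContinuousOn q (Set.Icc c b))
    (γ : ℝ) (hqγ : ∀ t ∈ Set.Ico c b, γ < q t)
    (u : ℝ → ℝ)
    (hu : ∀ t ∈ Set.Ico c b, DifferentiableAt ℝ u t)
    (hpu : ∀ t ∈ Set.Ico c b, DifferentiableAt ℝ (fun s => p s * deriv u s) t)
    (heq : ∀ t ∈ Set.Ico c b,
      deriv (fun s => p s * deriv u s) t = (q t - γ) * u t)
    (hu0 : u c = 1) (hu'0 : deriv u c = 0) :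
    ¬ IntegrableOn (fun x => u x ^ 2) (Set.Ioo c b) :=
  limit_point_of_degenerate_order_ge_two_general c b hcb n hn φ hφ hφpos p hpdef q γ hqγ u hu hpu
    heq hu0 hu'0
end

section
/- (Limit circle direction of the degenerate-coefficient criterion.) Let c > 0, let φ : ℝ → ℝ be continuously differentiable on [0,c] with φ(t) > 0 for all t ∈ [0,c], let q : ℝ → ℝ be continuous on [0,c], and set p(t) = t·φ(t). Then every solution u of the Sturm–Liouville equation −(p·u′)′ + q·u = 0 on (0,c) (i.e., u differentiable on (0,c), t ↦ p(t)·(deriv u)(t) differentiable on (0,c), and deriv(t ↦ p(t)·(deriv u)(t))(x) = q(x)·u(x) for all x ∈ (0,c)) satisfies: u² is integrable on (0,c′) for every c′ ∈ (0,c). Hence when p has a simple zero at the endpoint 0, the endpoint 0 is in the limit circle case. -/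
/-!
Write `v = p u'`. Since `p t ≥ m t` with `m = min φ > 0` and `q` is bounded by `Q`, the system
`u' = v / p`, `v' = q u` gives `|u'| ≤ m⁻¹ |v| / t` and `|v'| ≤ Q |u|` on `(0, c']`. Integrating
both from `t` to `c'`, Cauchy's formula for repeated integrals absorbs the factor `1 / t`, so
`|v t| ≤ C + Q m⁻¹ ∫_t^{c'} |v|`, and a backward Grönwall argument shows that `v` is bounded.
Hence `|u t| ≤ A + E log (c' / t) ≤ D (c' / t)^(1/4)`, and `u²` is dominated by a multiple of the
integrable function `t^(-1/2)`.
-/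

open MeasureTheory Set Real intervalIntegral

theorem abs_le_abs_add_integral_of_abs_deriv_le {f g : ℝ → ℝ} {a b : ℝ} (hab : a ≤ b)
    (hf : ∀ x ∈ Icc a b, DifferentiableAt ℝ f x) (hg : IntervalIntegrable g volume a b)
    (hfg : ∀ x ∈ Icc a b, |deriv f x| ≤ g x) :
    |f a| ≤ |f b| + ∫ x in a..b, g x := by
  have hint : IntervalIntegrable (deriv f) volume a b := by
    refine hg.mono_fun' (measurable_deriv f).aestronglyMeasurable ?_
    rw [uIoc_of_le hab]
    exact (ae_restrict_iff' measurableSet_Ioc).2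
      (ae_of_all _ fun x hx => hfg x (Ioc_subset_Icc_self hx))
  have ftc : ∫ x in a..b, deriv f x = f b - f a :=
    integral_eq_sub_of_hasDerivAt
      (fun x hx => (hf x (by rwa [uIcc_of_le hab] at hx)).hasDerivAt) hint
  calc |f a| = |f b - ∫ x in a..b, deriv f x| := by rw [ftc, sub_sub_cancel]
    _ ≤ |f b| + |∫ x in a..b, deriv f x| := abs_sub _ _
    _ ≤ |f b| + ∫ x in a..b, g x := by
      gcongr
      exact (abs_integral_le_integral_abs hab).trans (integral_mono_on hab hint.abs hg hfg)

theorem hasDerivAt_integral_left_of_continuousOn {f : ℝ → ℝ} {a b x : ℝ}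
    (hf : ContinuousOn f (Icc a b)) (hx : x ∈ Ioo a b) :
    HasDerivAt (fun y => ∫ r in y..b, f r) (-f x) x :=
  integral_hasDerivAt_left
    ((hf.mono (Icc_subset_Icc_left hx.1.le)).intervalIntegrable_of_Icc hx.2.le)
    ((hf.mono Ioo_subset_Icc_self).stronglyMeasurableAtFilter isOpen_Ioo x hx)
    (hf.continuousAt (Icc_mem_nhds hx.1 hx.2))

theorem continuousOn_integral_left {f : ℝ → ℝ} {a b : ℝ} (hab : a ≤ b)
    (hf : ContinuousOn f (Icc a b)) :
    ContinuousOn (fun y => ∫ r in y..b, f r) (Icc a b) := by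
  have := continuousOn_primitive_interval_left (μ := volume)
    (by rw [uIcc_of_le hab]; exact hf.integrableOn_Icc)
  rwa [uIcc_of_le hab] at this

theorem integral_integral_eq_integral_sub_mul {f : ℝ → ℝ} {a b : ℝ} (hab : a ≤ b)
    (hf : ContinuousOn f (Icc a b)) :
    ∫ x in a..b, ∫ r in x..b, f r = ∫ x in a..b, (x - a) * f x := by
  set F : ℝ → ℝ := fun y => ∫ r in y..b, f r
  have hF : ContinuousOn F (Icc a b) := continuousOn_integral_left hab hf
  have hsf : ContinuousOn (fun x => (x - a) * f x) (Icc a b) := by fun_prop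
  have ftc := integral_eq_sub_of_hasDerivAt_of_le hab (f := fun x => (x - a) * F x)
    (f' := fun x => F x - (x - a) * f x) (by fun_prop) (fun x hx => by
      refine (((hasDerivAt_id x).sub_const a).mul
        (hasDerivAt_integral_left_of_continuousOn hf hx)).congr_deriv ?_
      simp only [id_eq, F]
      ring)
    ((hF.sub hsf).intervalIntegrable_of_Icc hab)
  rw [integral_sub (hF.intervalIntegrable_of_Icc hab) (hsf.intervalIntegrable_of_Icc hab)] at ftc
  simpa [F, sub_eq_zero] using ftc

theorem le_mul_exp_of_le_add_mul_integral {f : ℝ → ℝ} {a b C L : ℝ} (hab : a ≤ b)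
    (hL : 0 ≤ L) (hf : ContinuousOn f (Icc a b))
    (hle : ∀ t ∈ Icc a b, f t ≤ C + L * ∫ x in t..b, f x) :
    ∀ t ∈ Icc a b, f t ≤ C * exp (L * (b - t)) := by
  set G : ℝ → ℝ := fun y => ∫ r in y..b, f r
  set H : ℝ → ℝ := fun t => exp (L * t) * (C + L * G t)
  have hG : ContinuousOn G (Icc a b) := continuousOn_integral_left hab hf
  -- `H' = L e^{Lt} (C + L G - f) ≥ 0`
  have hH : MonotoneOn H (Icc a b) := by
    refine monotoneOn_of_hasDerivWithinAt_nonneg (convex_Icc a b) (by fun_prop)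
      (f' := fun t => L * exp (L * t) * (C + L * G t - f t)) (fun t ht => ?_) (fun t ht => ?_)
    · rw [interior_Icc] at ht
      refine HasDerivAt.hasDerivWithinAt ?_
      refine ((((hasDerivAt_id t).const_mul L).exp).mul
        (((hasDerivAt_integral_left_of_continuousOn hf ht).const_mul L).const_add C)).congr_deriv ?_
      simp only [id_eq, G]
      ring
    · rw [interior_Icc] at ht
      have := hle t (Ioo_subset_Icc_self ht)
      have := exp_pos (L * t)
      have : 0 ≤ C + L * G t - f t := by linarith
      positivity
  intro t ht
  have hHt : H t ≤ H b := hH ht (right_mem_Icc.2 (ht.1.trans ht.2)) ht.2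
  have hexp : exp (L * b) = exp (L * t) * exp (L * (b - t)) := by rw [← exp_add]; ring_nf
  simp only [H, G, integral_same, mul_zero, add_zero, hexp, mul_assoc] at hHt
  have := le_of_mul_le_mul_left hHt (exp_pos _)
  linarith [hle t ht, mul_comm C (exp (L * (b - t)))]

theorem abs_le_abs_add_mul_log_of_abs_deriv_le {f : ℝ → ℝ} {b E : ℝ}
    (hf : ∀ x ∈ Ioc 0 b, DifferentiableAt ℝ f x) (hf' : ∀ x ∈ Ioc 0 b, |deriv f x| ≤ E / x) :
    ∀ t ∈ Ioc 0 b, |f t| ≤ |f b| + E * log (b / t) := by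
  intro t ht
  have hsub : Icc t b ⊆ Ioc 0 b := fun x hx => ⟨ht.1.trans_le hx.1, hx.2⟩
  have hint : IntervalIntegrable (fun x => E * x⁻¹) volume t b :=
    (intervalIntegrable_inv (fun x hx => by
      rw [uIcc_of_le ht.2] at hx; exact (ht.1.trans_le hx.1).ne') continuousOn_id).const_mul E
  have := abs_le_abs_add_integral_of_abs_deriv_le ht.2 (fun x hx => hf x (hsub hx)) hint
    (fun x hx => div_eq_mul_inv E x ▸ hf' x (hsub hx))
  rwa [intervalIntegral.integral_const_mul, integral_inv_of_pos ht.1 (ht.1.trans_le ht.2)] at this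

theorem integrableOn_sq_of_abs_le_add_mul_log {f : ℝ → ℝ} {b A E : ℝ} (hb : 0 < b)
    (hf : AEStronglyMeasurable f (volume.restrict (Ioo 0 b)))
    (hle : ∀ x ∈ Ioo 0 b, |f x| ≤ A + E * log (b / x)) :
    IntegrableOn (fun x => f x ^ 2) (Ioo 0 b) := by
  set D := |A| + 4 * |E|
  have hdom : IntegrableOn (fun x : ℝ => D ^ 2 * b ^ (2⁻¹ : ℝ) * x ^ (-2⁻¹ : ℝ)) (Ioo 0 b) :=
    ((integrableOn_Ioo_rpow_iff hb).2 (by norm_num)).const_mul _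
  refine hdom.mono' (hf.pow 2) ((ae_restrict_iff' measurableSet_Ioo).2 (ae_of_all _ ?_))
  intro x hx
  have hy : 1 ≤ b / x := (one_le_div hx.1).2 hx.2.le
  have hlog : log (b / x) ≤ 4 * (b / x) ^ (4⁻¹ : ℝ) := by
    have := log_le_rpow_div (zero_le_one.trans hy) (by norm_num : (0 : ℝ) < 4⁻¹)
    rwa [div_inv_eq_mul, mul_comm] at this
  have hpow : 1 ≤ (b / x) ^ (4⁻¹ : ℝ) := one_le_rpow hy (by norm_num)
  have hfx : |f x| ≤ D * (b / x) ^ (4⁻¹ : ℝ) := by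
    have h0 : 0 ≤ log (b / x) := log_nonneg hy
    calc |f x| ≤ |A| + |E| * log (b / x) := by
          refine (hle x hx).trans (add_le_add (le_abs_self A) ?_)
          exact mul_le_mul_of_nonneg_right (le_abs_self E) h0
      _ ≤ |A| * (b / x) ^ (4⁻¹ : ℝ) + |E| * (4 * (b / x) ^ (4⁻¹ : ℝ)) := by
          gcongr
          exact le_mul_of_one_le_right (abs_nonneg A) hpow
      _ = D * (b / x) ^ (4⁻¹ : ℝ) := by ring
  have hsq : ((b / x) ^ (4⁻¹ : ℝ)) ^ 2 = b ^ (2⁻¹ : ℝ) * x ^ (-2⁻¹ : ℝ) := by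
    rw [← rpow_natCast, ← rpow_mul (div_nonneg hb.le hx.1.le), div_rpow hb.le hx.1.le,
      rpow_neg hx.1.le, div_eq_mul_inv]
    norm_num
  calc ‖f x ^ 2‖ = |f x| ^ 2 := by rw [Real.norm_eq_abs, abs_pow]
    _ ≤ (D * (b / x) ^ (4⁻¹ : ℝ)) ^ 2 := pow_le_pow_left₀ (abs_nonneg _) hfx 2
    _ = D ^ 2 * b ^ (2⁻¹ : ℝ) * x ^ (-2⁻¹ : ℝ) := by rw [mul_pow, hsq, mul_assoc]

section FirstOrderSystem

variable {u v : ℝ → ℝ} {b M Q : ℝ}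

theorem integral_abs_le_of_abs_deriv_le_mul_div (hM : 0 ≤ M)
    (hu : ∀ x ∈ Ioc 0 b, DifferentiableAt ℝ u x) (hv : ∀ x ∈ Ioc 0 b, DifferentiableAt ℝ v x)
    (hu' : ∀ x ∈ Ioc 0 b, |deriv u x| ≤ M * |v x| / x) {t : ℝ} (ht : t ∈ Ioc 0 b) :
    ∫ x in t..b, |u x| ≤ b * |u b| + M * ∫ x in t..b, |v x| := by
  have hsub : Icc t b ⊆ Ioc 0 b := fun x hx => ⟨ht.1.trans_le hx.1, hx.2⟩
  have hpos : ∀ x ∈ Icc t b, 0 < x := fun x hx => (hsub hx).1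
  have hu_cont : ContinuousOn u (Icc t b) := continuousOn_of_forall_continuousAt fun x hx =>
    (hu x (hsub hx)).continuousAt
  have hv_cont : ContinuousOn v (Icc t b) := continuousOn_of_forall_continuousAt fun x hx =>
    (hv x (hsub hx)).continuousAt
  set g : ℝ → ℝ := fun r => M * |v r| / r
  have hg : ContinuousOn g (Icc t b) :=
    (continuousOn_const.mul hv_cont.abs).div continuousOn_id fun x hx => (hpos x hx).ne'
  have hpt : ∀ x ∈ Icc t b, |u x| ≤ |u b| + ∫ r in x..b, g r := fun x hx =>
    abs_le_abs_add_integral_of_abs_deriv_le hx.2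
      (fun y hy => hu y (hsub ⟨hx.1.trans hy.1, hy.2⟩))
      ((hg.mono (Icc_subset_Icc_left hx.1)).intervalIntegrable_of_Icc hx.2)
      (fun y hy => hu' y (hsub ⟨hx.1.trans hy.1, hy.2⟩))
  -- `(x - t) / x ≤ 1`
  have hweight : ∀ x ∈ Icc t b, (x - t) * g x ≤ M * |v x| := fun x hx => by
    have hx := hpos x hx
    rw [mul_div_assoc', div_le_iff₀ hx]
    have : 0 ≤ M * |v x| := by positivity
    nlinarith [ht.1]
  calc ∫ x in t..b, |u x| ≤ ∫ x in t..b, (|u b| + ∫ r in x..b, g r) :=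
        integral_mono_on ht.2 (hu_cont.abs.intervalIntegrable_of_Icc ht.2)
          ((continuousOn_const.add (continuousOn_integral_left ht.2 hg)).intervalIntegrable_of_Icc
            ht.2) hpt
    _ = (b - t) * |u b| + ∫ x in t..b, (x - t) * g x := by
        rw [integral_add intervalIntegrable_const
          ((continuousOn_integral_left ht.2 hg).intervalIntegrable_of_Icc ht.2),
          integral_integral_eq_integral_sub_mul ht.2 hg, intervalIntegral.integral_const,
          smul_eq_mul]
    _ ≤ b * |u b| + ∫ x in t..b, M * |v x| := by
        gcongr ?_ + ?_
        · nlinarith [ht.1, abs_nonneg (u b)]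
        · exact integral_mono_on ht.2
            (((continuousOn_id.sub continuousOn_const).mul hg).intervalIntegrable_of_Icc ht.2)
            ((continuousOn_const.mul hv_cont.abs).intervalIntegrable_of_Icc ht.2) hweight
    _ = b * |u b| + M * ∫ x in t..b, |v x| := by rw [intervalIntegral.integral_const_mul]

theorem abs_le_add_mul_integral_abs_of_abs_deriv_le (hM : 0 ≤ M) (hQ : 0 ≤ Q)
    (hu : ∀ x ∈ Ioc 0 b, DifferentiableAt ℝ u x) (hv : ∀ x ∈ Ioc 0 b, DifferentiableAt ℝ v x)
    (hu' : ∀ x ∈ Ioc 0 b, |deriv u x| ≤ M * |v x| / x)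
    (hv' : ∀ x ∈ Ioc 0 b, |deriv v x| ≤ Q * |u x|) {t : ℝ} (ht : t ∈ Ioc 0 b) :
    |v t| ≤ (|v b| + Q * (b * |u b|)) + Q * M * ∫ x in t..b, |v x| := by
  have hsub : Icc t b ⊆ Ioc 0 b := fun x hx => ⟨ht.1.trans_le hx.1, hx.2⟩
  have hu_cont : ContinuousOn u (Icc t b) := continuousOn_of_forall_continuousAt fun x hx =>
    (hu x (hsub hx)).continuousAt
  calc |v t| ≤ |v b| + ∫ x in t..b, Q * |u x| :=
        abs_le_abs_add_integral_of_abs_deriv_le ht.2 (fun x hx => hv x (hsub hx))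
          ((continuousOn_const.mul hu_cont.abs).intervalIntegrable_of_Icc ht.2)
          (fun x hx => hv' x (hsub hx))
    _ = |v b| + Q * ∫ x in t..b, |u x| := by rw [intervalIntegral.integral_const_mul]
    _ ≤ |v b| + Q * (b * |u b| + M * ∫ x in t..b, |v x|) := by
        gcongr
        exact integral_abs_le_of_abs_deriv_le_mul_div hM hu hv hu' ht
    _ = (|v b| + Q * (b * |u b|)) + Q * M * ∫ x in t..b, |v x| := by ring

theorem exists_abs_le_of_abs_deriv_le (hM : 0 ≤ M) (hQ : 0 ≤ Q)
    (hu : ∀ x ∈ Ioc 0 b, DifferentiableAt ℝ u x) (hv : ∀ x ∈ Ioc 0 b, DifferentiableAt ℝ v x)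
    (hu' : ∀ x ∈ Ioc 0 b, |deriv u x| ≤ M * |v x| / x)
    (hv' : ∀ x ∈ Ioc 0 b, |deriv v x| ≤ Q * |u x|) :
    ∃ K, ∀ t ∈ Ioc 0 b, |v t| ≤ K := by
  set C := |v b| + Q * (b * |u b|)
  refine ⟨C * exp (Q * M * b), fun t ht => ?_⟩
  have hsub : Icc t b ⊆ Ioc 0 b := fun x hx => ⟨ht.1.trans_le hx.1, hx.2⟩
  have hC : 0 ≤ C := by have := ht.1.trans_le ht.2; positivity
  calc |v t| ≤ C * exp (Q * M * (b - t)) :=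
        le_mul_exp_of_le_add_mul_integral ht.2 (mul_nonneg hQ hM)
          (continuousOn_of_forall_continuousAt fun x hx => (hv x (hsub hx)).continuousAt.abs)
          (fun s hs => abs_le_add_mul_integral_abs_of_abs_deriv_le hM hQ hu hv hu' hv' (hsub hs))
          t (left_mem_Icc.2 ht.2)
    _ ≤ C * exp (Q * M * b) := by
        gcongr
        have := ht.1.le
        have := mul_nonneg hQ hM
        nlinarith

theorem integrableOn_sq_of_abs_deriv_le (hb : 0 < b) (hM : 0 ≤ M) (hQ : 0 ≤ Q)
    (hu : ∀ x ∈ Ioc 0 b, DifferentiableAt ℝ u x) (hv : ∀ x ∈ Ioc 0 b, DifferentiableAt ℝ v x)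
    (hu' : ∀ x ∈ Ioc 0 b, |deriv u x| ≤ M * |v x| / x)
    (hv' : ∀ x ∈ Ioc 0 b, |deriv v x| ≤ Q * |u x|) :
    IntegrableOn (fun x => u x ^ 2) (Ioo 0 b) := by
  obtain ⟨K, hK⟩ := exists_abs_le_of_abs_deriv_le hM hQ hu hv hu' hv'
  have hlog := abs_le_abs_add_mul_log_of_abs_deriv_le (E := M * K) hu fun x hx =>
    (hu' x hx).trans (by gcongr; exacts [hx.1.le, hK x hx])
  refine integrableOn_sq_of_abs_le_add_mul_log hb ?_ fun x hx => hlog x (Ioo_subset_Ioc_self hx)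
  exact ContinuousOn.aestronglyMeasurable (continuousOn_of_forall_continuousAt fun x hx =>
    (hu x (Ioo_subset_Ioc_self hx)).continuousAt) measurableSet_Ioo

end FirstOrderSystem

/-- Limit circle direction of the degenerate-coefficient criterion: if
`p(t) = t·φ(t)` with `φ` continuously differentiable and positive on `[0,c]`, then every
solution `u` of the Sturm–Liouville equation `−(p·u')' + q·u = 0` on `(0,c)` is
square-integrable on `(0,c')` for every `c' ∈ (0,c)`; hence the endpoint `0` (a simple
zero of `p`) is in the limit circle case. -/
theorem limit_circle_of_simple_zero
    (c : ℝ) (hc : 0 < c)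
    (φ : ℝ → ℝ)
    (hφ : ContDiffOn ℝ 1 φ (Set.Icc 0 c))
    (hφpos : ∀ t ∈ Set.Icc 0 c, 0 < φ t)
    (q : ℝ → ℝ) (hq : ContinuousOn q (Set.Icc 0 c))
    (p : ℝ → ℝ) (hpdef : ∀ t, p t = t * φ t)
    (u : ℝ → ℝ)
    (hu : ∀ t ∈ Set.Ioo 0 c, DifferentiableAt ℝ u t)
    (hpu : ∀ t ∈ Set.Ioo 0 c, DifferentiableAt ℝ (fun s => p s * deriv u s) t)
    (heq : ∀ t ∈ Set.Ioo 0 c,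
      deriv (fun s => p s * deriv u s) t = q t * u t) :
    ∀ c' ∈ Set.Ioo 0 c, IntegrableOn (fun x => u x ^ 2) (Set.Ioo 0 c') := by
  obtain ⟨t₀, ht₀, hmin⟩ := isCompact_Icc.exists_isMinOn (nonempty_Icc.2 hc.le) hφ.continuousOn
  obtain ⟨Q, hQ⟩ := isCompact_Icc.exists_bound_of_continuousOn hq
  have hm : 0 < φ t₀ := hφpos t₀ ht₀
  set v : ℝ → ℝ := fun s => p s * deriv u s
  have hu' : ∀ x ∈ Ioo 0 c, |deriv u x| ≤ (φ t₀)⁻¹ * |v x| / x := fun x hx => by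
    have hφx : φ t₀ ≤ φ x := hmin (Ioo_subset_Icc_self hx)
    have hpx : 0 < x * φ x := mul_pos hx.1 (hm.trans_le hφx)
    calc |deriv u x| = |v x| / (x * φ x) := by
          rw [eq_div_iff hpx.ne', show v x = x * φ x * deriv u x from by simp [v, hpdef], abs_mul,
            abs_of_pos hpx, mul_comm]
      _ ≤ |v x| / (x * φ t₀) := by have := hx.1; gcongr
      _ = (φ t₀)⁻¹ * |v x| / x := by field_simp
  have hv' : ∀ x ∈ Ioo 0 c, |deriv v x| ≤ Q * |u x| := fun x hx => by
    rw [heq x hx, abs_mul]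
    exact mul_le_mul_of_nonneg_right (hQ x (Ioo_subset_Icc_self hx)) (abs_nonneg _)
  intro c' hc'
  have hsub : Ioc 0 c' ⊆ Ioo 0 c := Ioc_subset_Ioo_right hc'.2
  exact integrableOn_sq_of_abs_deriv_le hc'.1 (inv_nonneg.2 hm.le)
    ((norm_nonneg _).trans (hQ 0 (left_mem_Icc.2 hc.le)))
    (fun x hx => hu x (hsub hx)) (fun x hx => hpu x (hsub hx))
    (fun x hx => hu' x (hsub hx)) (fun x hx => hv' x (hsub hx))
end

section
/- (Comparison claim.) Let c > 0 and let K, L ≥ 0 be real constants. Let φ : ℝ → ℝ be differentiable on (0,c] with φ(x) > 0 there, and let q : ℝ → ℝ satisfy, for all x ∈ (0,c], L ≥ |1 + x·(deriv φ)(x)/φ(x)| and K ≥ |q(x)/φ(x)|. Let u : ℝ → ℝ be twice continuously differentiable on (0,c] satisfying x·u″(x) + (1 + x·(deriv φ)(x)/φ(x))·u′(x) = (q(x)/φ(x))·u(x) for all x ∈ (0,c] (equivalently −x·φ(x)·u″(x) − (φ(x)+x·φ′(x))·u′(x) + q(x)·u(x) = 0), and let u₀ : ℝ → ℝ be twice continuously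 differentiable on (0,c] satisfying x·u₀″(x) = −L·u₀′(x) + K·u₀(x) for all x ∈ (0,c], with u₀(c) = |u(c)| + 1 and u₀′(c) = −|u′(c)| − 1. Then for all x ∈ (0,c): |u(x)| < u₀(x) and u₀′(x) < −|u′(x)|. -/
/-!
The two functions `u₀ ± u` and `u₀' ± u'` are compared with their values at `c`, moving leftwards.
As long as `|u| ≤ u₀` and `|u'| ≤ -u₀'`, the equations and the coefficient bounds give
`|x u''| ≤ K |u| + L |u'| ≤ K u₀ - L u₀' = x u₀''`, so `u₀' ± u'` is nondecreasing and hence stays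
below its value `≤ -1` at `c`; then `u₀ ± u` is decreasing and stays above its value `≥ 1` at `c`.
The margin `1` turns the weak inequalities on `(t, c)` into strict ones at `t`; hence the closed set
of points of `[x, c]` where the strict inequalities fail cannot contain its supremum, so it is empty.
-/

open Set

theorem forall_mem_Icc_of_forall_Ioc_imp {α : Type*} [ConditionallyCompleteLinearOrder α]
    [TopologicalSpace α] [OrderTopology α] {a b : α} {P : α → Prop}
    (hclosed : IsClosed {y ∈ Icc a b | ¬ P y})
    (hstep : ∀ t ∈ Icc a b, (∀ y ∈ Ioc t b, P y) → P t) :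
    ∀ y ∈ Icc a b, P y := by
  by_contra! ⟨y₀, hy₀, hPy₀⟩
  set F := {y ∈ Icc a b | ¬ P y}
  have hbdd : BddAbove F := ⟨b, fun y hy => hy.1.2⟩
  have htF : sSup F ∈ F := hclosed.csSup_mem ⟨y₀, hy₀, hPy₀⟩ hbdd
  refine htF.2 (hstep _ htF.1 fun y hy => ?_)
  by_contra hPy
  exact (le_csSup hbdd ⟨⟨htF.1.1.trans hy.1.le, hy.2⟩, hPy⟩).not_gt hy.1

theorem abs_mul_le_abs_of_abs_le_one {ε p : ℝ} (hε : |ε| ≤ 1) : |ε * p| ≤ |p| := by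
  rw [abs_mul]
  exact mul_le_of_le_one_left (abs_nonneg p) hε

theorem le_of_deriv_nonneg_of_mem_Icc {f : ℝ → ℝ} {t c : ℝ}
    (hf : ∀ x ∈ Icc t c, DifferentiableAt ℝ f x) (hf' : ∀ x ∈ Ioo t c, 0 ≤ deriv f x) :
    ∀ x ∈ Icc t c, f x ≤ f c := fun x hx =>
  monotoneOn_of_deriv_nonneg (convex_Icc t c)
    (fun y hy => (hf y hy).continuousAt.continuousWithinAt)
    (fun y hy => (hf y (interior_subset hy)).differentiableWithinAt)
    (by rwa [interior_Icc]) hx ⟨hx.1.trans hx.2, le_rfl⟩ hx.2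

theorem le_of_deriv_nonpos_of_mem_Icc {f : ℝ → ℝ} {t c : ℝ}
    (hf : ∀ x ∈ Icc t c, DifferentiableAt ℝ f x) (hf' : ∀ x ∈ Ioo t c, deriv f x ≤ 0) :
    ∀ x ∈ Icc t c, f c ≤ f x := fun x hx =>
  antitoneOn_of_deriv_nonpos (convex_Icc t c)
    (fun y hy => (hf y hy).continuousAt.continuousWithinAt)
    (fun y hy => (hf y (interior_subset hy)).differentiableWithinAt)
    (by rwa [interior_Icc]) hx ⟨hx.1.trans hx.2, le_rfl⟩ hx.2

theorem add_mul_nonneg_of_model_equation {x a b K L ε p p' p'' w w' w'' : ℝ} (hx : 0 < x)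
    (hε : |ε| ≤ 1) (ha : |a| ≤ L) (hb : |b| ≤ K) (hp : |p| ≤ w) (hp' : w' ≤ -|p'|)
    (heq : x * p'' + a * p' = b * p) (hweq : x * w'' = -L * w' + K * w) :
    0 ≤ w'' + ε * p'' := by
  have hbp : |b * p| ≤ K * w := by
    rw [abs_mul]; exact mul_le_mul hb hp (abs_nonneg p) ((abs_nonneg b).trans hb)
  have hap : |a * p'| ≤ L * -w' := by
    rw [abs_mul]; exact mul_le_mul ha (by linarith) (abs_nonneg p') ((abs_nonneg a).trans ha)
  have hxp : |x * p''| ≤ x * w'' := by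
    rw [hweq, show x * p'' = b * p - a * p' by linarith]
    linarith [abs_sub (b * p) (a * p')]
  have hεp : -(x * w'') ≤ ε * (x * p'') :=
    (abs_le.mp ((abs_mul_le_abs_of_abs_le_one hε).trans hxp)).1
  exact nonneg_of_mul_nonneg_right (by linarith : 0 ≤ x * (w'' + ε * p'')) hx

section ModelComparison

variable {t c K L ε : ℝ} {a b u u₀ : ℝ → ℝ}

theorem deriv_add_mul_deriv_le_neg_one (ht : 0 < t) (hε : |ε| ≤ 1)
    (ha : ∀ x ∈ Ioo t c, |a x| ≤ L) (hb : ∀ x ∈ Ioo t c, |b x| ≤ K)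
    (hu' : ∀ x ∈ Icc t c, DifferentiableAt ℝ (deriv u) x)
    (hueq : ∀ x ∈ Ioo t c, x * deriv (deriv u) x + a x * deriv u x = b x * u x)
    (hu₀' : ∀ x ∈ Icc t c, DifferentiableAt ℝ (deriv u₀) x)
    (hu₀eq : ∀ x ∈ Ioo t c, x * deriv (deriv u₀) x = -L * deriv u₀ x + K * u₀ x)
    (hu₀'c : deriv u₀ c ≤ -|deriv u c| - 1)
    (hdom : ∀ x ∈ Ioo t c, |u x| ≤ u₀ x ∧ deriv u₀ x ≤ -|deriv u x|) :
    ∀ x ∈ Icc t c, deriv u₀ x + ε * deriv u x ≤ -1 := by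
  have hdiff : ∀ x ∈ Icc t c, DifferentiableAt ℝ (fun y => deriv u₀ y + ε * deriv u y) x :=
    fun x hx => (hu₀' x hx).add ((hu' x hx).const_mul ε)
  have hmono := le_of_deriv_nonneg_of_mem_Icc hdiff fun x hx => by
    have hxI : x ∈ Icc t c := Ioo_subset_Icc_self hx
    rw [deriv_fun_add (hu₀' x hxI) ((hu' x hxI).const_mul ε), deriv_const_mul ε (hu' x hxI)]
    exact add_mul_nonneg_of_model_equation (ht.trans hx.1) hε (ha x hx) (hb x hx)
      (hdom x hx).1 (hdom x hx).2 (hueq x hx) (hu₀eq x hx)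
  have hc : ε * deriv u c ≤ |deriv u c| :=
    (le_abs_self _).trans (abs_mul_le_abs_of_abs_le_one hε)
  exact fun x hx => (hmono x hx).trans (by linarith)

theorem abs_lt_of_model_equation (ht : 0 < t)
    (ha : ∀ x ∈ Ioo t c, |a x| ≤ L) (hb : ∀ x ∈ Ioo t c, |b x| ≤ K)
    (hu : ∀ x ∈ Icc t c, DifferentiableAt ℝ u x)
    (hu' : ∀ x ∈ Icc t c, DifferentiableAt ℝ (deriv u) x)
    (hueq : ∀ x ∈ Ioo t c, x * deriv (deriv u) x + a x * deriv u x = b x * u x)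
    (hu₀ : ∀ x ∈ Icc t c, DifferentiableAt ℝ u₀ x)
    (hu₀' : ∀ x ∈ Icc t c, DifferentiableAt ℝ (deriv u₀) x)
    (hu₀eq : ∀ x ∈ Ioo t c, x * deriv (deriv u₀) x = -L * deriv u₀ x + K * u₀ x)
    (hu₀c : |u c| + 1 ≤ u₀ c) (hu₀'c : deriv u₀ c ≤ -|deriv u c| - 1)
    (hdom : ∀ x ∈ Ioo t c, |u x| ≤ u₀ x ∧ deriv u₀ x ≤ -|deriv u x|) :
    ∀ x ∈ Icc t c, |u x| < u₀ x ∧ deriv u₀ x < -|deriv u x| := by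
  have hderiv : ∀ ε : ℝ, |ε| ≤ 1 → ∀ x ∈ Icc t c, deriv u₀ x + ε * deriv u x ≤ -1 :=
    fun ε hε => deriv_add_mul_deriv_le_neg_one ht hε ha hb hu' hueq hu₀' hu₀eq hu₀'c hdom
  have hval : ∀ ε : ℝ, |ε| ≤ 1 → ∀ x ∈ Icc t c, 1 ≤ u₀ x + ε * u x := by
    intro ε hε
    have hdiff : ∀ x ∈ Icc t c, DifferentiableAt ℝ (fun y => u₀ y + ε * u y) x :=
      fun x hx => (hu₀ x hx).add ((hu x hx).const_mul ε)
    have hanti := le_of_deriv_nonpos_of_mem_Icc hdiff fun x hx => by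
      have hxI : x ∈ Icc t c := Ioo_subset_Icc_self hx
      rw [deriv_fun_add (hu₀ x hxI) ((hu x hxI).const_mul ε), deriv_const_mul ε (hu x hxI)]
      linarith [hderiv ε hε x hxI]
    have hc : -|u c| ≤ ε * u c := (abs_le.mp (abs_mul_le_abs_of_abs_le_one hε)).1
    exact fun x hx => (by linarith : 1 ≤ u₀ c + ε * u c).trans (hanti x hx)
  intro x hx
  have h₁ : |u x| < u₀ x := abs_lt.mpr
    ⟨by linarith [hval 1 (by norm_num) x hx], by linarith [hval (-1) (by norm_num) x hx]⟩
  have h₂ : |deriv u x| < -deriv u₀ x := abs_lt.mpr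
    ⟨by linarith [hderiv (-1) (by norm_num) x hx], by linarith [hderiv 1 (by norm_num) x hx]⟩
  exact ⟨h₁, by linarith⟩

end ModelComparison

theorem comparison_with_model_equation_general
    (c : ℝ)
    (K L : ℝ)
    (φ : ℝ → ℝ)
    (q : ℝ → ℝ)
    (hLbd : ∀ x ∈ Set.Ioc 0 c, |1 + x * deriv φ x / φ x| ≤ L)
    (hKbd : ∀ x ∈ Set.Ioc 0 c, |q x / φ x| ≤ K)
    (u : ℝ → ℝ)
    (hu : ∀ x ∈ Set.Ioc 0 c, DifferentiableAt ℝ u x)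
    (hu' : ∀ x ∈ Set.Ioc 0 c, DifferentiableAt ℝ (deriv u) x)
    (hueq : ∀ x ∈ Set.Ioc 0 c,
      x * deriv (deriv u) x + (1 + x * deriv φ x / φ x) * deriv u x
        = (q x / φ x) * u x)
    (u₀ : ℝ → ℝ)
    (hu₀ : ∀ x ∈ Set.Ioc 0 c, DifferentiableAt ℝ u₀ x)
    (hu₀' : ∀ x ∈ Set.Ioc 0 c, DifferentiableAt ℝ (deriv u₀) x)
    (hu₀eq : ∀ x ∈ Set.Ioc 0 c,
      x * deriv (deriv u₀) x = -L * deriv u₀ x + K * u₀ x)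
    (hu₀c : u₀ c = |u c| + 1)
    (hu₀'c : deriv u₀ c = -|deriv u c| - 1) :
    ∀ x ∈ Set.Ioo 0 c, |u x| < u₀ x ∧ deriv u₀ x < -|deriv u x| := by
  intro x hx
  have hIcc : ∀ t ∈ Icc x c, Icc t c ⊆ Ioc 0 c :=
    fun t ht y hy => ⟨hx.1.trans_le (ht.1.trans hy.1), hy.2⟩
  have hIoo : ∀ t ∈ Icc x c, Ioo t c ⊆ Ioc 0 c :=
    fun t ht => Ioo_subset_Icc_self.trans (hIcc t ht)
  have hcont : ∀ f : ℝ → ℝ, (∀ y ∈ Ioc 0 c, DifferentiableAt ℝ f y) → ContinuousOn f (Icc x c) :=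
    fun f hf y hy => (hf y (hIcc x ⟨le_rfl, hx.2.le⟩ hy)).continuousAt.continuousWithinAt
  refine forall_mem_Icc_of_forall_Ioc_imp
    (P := fun y => |u y| < u₀ y ∧ deriv u₀ y < -|deriv u y|) ?_ (fun t ht hgt => ?_) x ⟨le_rfl, hx.2.le⟩
  · simp only [not_and_or, not_lt, sep_or]
    exact (isClosed_Icc.isClosed_le (hcont u₀ hu₀) (hcont u hu).abs).union
      (isClosed_Icc.isClosed_le (hcont _ hu').abs.neg (hcont _ hu₀'))
  · exact abs_lt_of_model_equation (a := fun y => 1 + y * deriv φ y / φ y) (b := fun y => q y / φ y)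
      (hx.1.trans_le ht.1) (fun y hy => hLbd y (hIoo t ht hy)) (fun y hy => hKbd y (hIoo t ht hy))
      (fun y hy => hu y (hIcc t ht hy)) (fun y hy => hu' y (hIcc t ht hy))
      (fun y hy => hueq y (hIoo t ht hy)) (fun y hy => hu₀ y (hIcc t ht hy))
      (fun y hy => hu₀' y (hIcc t ht hy)) (fun y hy => hu₀eq y (hIoo t ht hy)) hu₀c.ge hu₀'c.le
      (fun y hy => (hgt y ⟨hy.1, hy.2.le⟩).imp le_of_lt le_of_lt) t ⟨le_rfl, ht.2⟩

/-- Comparison claim: a solution `u` of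
`x·u'' + (1 + x·φ'(x)/φ(x))·u' = (q(x)/φ(x))·u` on `(0,c]` is dominated by the solution
`u₀` of the model equation `x·u₀'' = −L·u₀' + K·u₀` with `u₀(c) = |u(c)| + 1`,
`u₀'(c) = −|u'(c)| − 1`, where `L ≥ |1 + x·φ'(x)/φ(x)|` and `K ≥ |q(x)/φ(x)|`:
for all `x ∈ (0,c)`, `|u(x)| < u₀(x)` and `u₀'(x) < −|u'(x)|`. -/
theorem comparison_with_model_equation
    (c : ℝ) (hc : 0 < c)
    (K L : ℝ) (hK : 0 ≤ K) (hL : 0 ≤ L)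
    (φ : ℝ → ℝ)
    (hφ : ∀ x ∈ Set.Ioc 0 c, DifferentiableAt ℝ φ x)
    (hφpos : ∀ x ∈ Set.Ioc 0 c, 0 < φ x)
    (q : ℝ → ℝ)
    (hLbd : ∀ x ∈ Set.Ioc 0 c, |1 + x * deriv φ x / φ x| ≤ L)
    (hKbd : ∀ x ∈ Set.Ioc 0 c, |q x / φ x| ≤ K)
    (u : ℝ → ℝ)
    (hu : ∀ x ∈ Set.Ioc 0 c, DifferentiableAt ℝ u x)
    (hu' : ∀ x ∈ Set.Ioc 0 c, DifferentiableAt ℝ (deriv u) x)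
    (hu'' : ContinuousOn (deriv (deriv u)) (Set.Ioc 0 c))
    (hueq : ∀ x ∈ Set.Ioc 0 c,
      x * deriv (deriv u) x + (1 + x * deriv φ x / φ x) * deriv u x
        = (q x / φ x) * u x)
    (u₀ : ℝ → ℝ)
    (hu₀ : ∀ x ∈ Set.Ioc 0 c, DifferentiableAt ℝ u₀ x)
    (hu₀' : ∀ x ∈ Set.Ioc 0 c, DifferentiableAt ℝ (deriv u₀) x)
    (hu₀'' : ContinuousOn (deriv (deriv u₀)) (Set.Ioc 0 c))
    (hu₀eq : ∀ x ∈ Set.Ioc 0 c,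
      x * deriv (deriv u₀) x = -L * deriv u₀ x + K * u₀ x)
    (hu₀c : u₀ c = |u c| + 1)
    (hu₀'c : deriv u₀ c = -|deriv u c| - 1) :
    ∀ x ∈ Set.Ioo 0 c, |u x| < u₀ x ∧ deriv u₀ x < -|deriv u x| :=
  comparison_with_model_equation_general c K L φ q hLbd hKbd u hu hu' hueq u₀ hu₀ hu₀' hu₀eq hu₀c
    hu₀'c
end
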